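/- arXiv:1907.13074 — 5 statements merged into one kernel-verified Lean document; each statement's English description precedes it below -/
import Mathlib

section
/- Let G be a generalized comb with base C. Then every longest path of G contains every vertex of C. In particular, all longest paths of G have a common vertex. -/
open SimpleGraph

/-- `G` contains no induced subgraph isomorphic to `H`. -/
def IndFree {V W : Type} (G : SimpleGraph V) (H : SimpleGraph W) : Prop :=
  ¬ Nonempty (H ↪g G)

/-- The claw `K_{1,3}`: the star with three leaves, centered at `0`. -/
def claw : SimpleGraph (Fin 4) :=
  SimpleGraph.fromRel (fun a _ => a = 0)

/-- The triangle `C₃`. -/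
def triangle : SimpleGraph (Fin 3) := ⊤

/-- `Z₁ = N_{1,0,0}`: a triangle with a pendant edge. -/
def Zgraph1 : SimpleGraph (Fin 4) :=
  SimpleGraph.fromRel (fun a b => (a, b) ∈ ([(0,1),(0,2),(1,2),(2,3)] : List (Fin 4 × Fin 4)))

/-- `Z₂ = N_{2,0,0}`: a triangle with a pendant path on two further vertices. -/
def Zgraph2 : SimpleGraph (Fin 5) :=
  SimpleGraph.fromRel (fun a b => (a, b) ∈ ([(0,1),(0,2),(1,2),(2,3),(3,4)] : List (Fin 5 × Fin 5)))

/-- `Z₃ = N_{3,0,0}`: a triangle with a pendant path on three further vertices. -/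
def Zgraph3 : SimpleGraph (Fin 6) :=
  SimpleGraph.fromRel (fun a b =>
    (a, b) ∈ ([(0,1),(0,2),(1,2),(2,3),(3,4),(4,5)] : List (Fin 6 × Fin 6)))

/-- `B_{1,1} = N_{1,1,0}`: a triangle with pendant edges at two of its vertices. -/
def Bgraph11 : SimpleGraph (Fin 5) :=
  SimpleGraph.fromRel (fun a b => (a, b) ∈ ([(0,1),(0,2),(1,2),(0,3),(1,4)] : List (Fin 5 × Fin 5)))

/-- `B_{1,2} = N_{1,2,0}`: a triangle with a pendant edge at one vertex and a pendant
path on two further vertices at another vertex. -/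
def Bgraph12 : SimpleGraph (Fin 6) :=
  SimpleGraph.fromRel (fun a b =>
    (a, b) ∈ ([(0,1),(0,2),(1,2),(0,3),(1,4),(4,5)] : List (Fin 6 × Fin 6)))

/-- `N_{1,1,1}` (the net): a triangle with a pendant edge at each vertex. -/
def Ngraph111 : SimpleGraph (Fin 6) :=
  SimpleGraph.fromRel (fun a b =>
    (a, b) ∈ ([(0,1),(0,2),(1,2),(0,3),(1,4),(2,5)] : List (Fin 6 × Fin 6)))

/-- A longest path of `G`: a path such that no path of `G` is strictly longer. -/
def IsLongestPath {V : Type} {u v : V} (G : SimpleGraph V) (p : G.Walk u v) : Prop :=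
  p.IsPath ∧ ∀ (w x : V) (q : G.Walk w x), q.IsPath → q.length ≤ p.length

/-- A graph is traceable if it has a Hamiltonian path. -/
def Traceable {V : Type} (G : SimpleGraph V) : Prop :=
  ∃ (u v : V) (p : G.Walk u v), p.IsPath ∧ ∀ w : V, w ∈ p.support

/-- A graph is 2-connected if it has at least 3 vertices and deleting any single vertex
leaves it connected. -/
def TwoConnected {V : Type} [Fintype V] (G : SimpleGraph V) : Prop :=
  3 ≤ Fintype.card V ∧ ∀ v : V, (G.induce {v}ᶜ).Connected

/-- A set of vertices induces a 2-connected subgraph. -/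
def TwoConnectedOn {V : Type} (G : SimpleGraph V) (B : Set V) : Prop :=
  3 ≤ B.ncard ∧ ∀ v : V, (G.induce (B \ {v})).Connected

/-- `B` is a block of `G`: a maximal vertex set inducing a connected subgraph
without a cutvertex. -/
def IsBlock {V : Type} (G : SimpleGraph V) (B : Set V) : Prop :=
  B.Nonempty ∧ (G.induce B).Connected ∧
    (∀ v : V, (G.induce (B \ {v})).Preconnected) ∧
    ∀ B' : Set V, B ⊆ B' → (G.induce B').Connected →
      (∀ v : V, (G.induce (B' \ {v})).Preconnected) → B' = B

/-- `G` is a generalized comb with base `C`. -/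
def IsGeneralizedComb {V : Type} [Fintype V] (G : SimpleGraph V) (C : Set V) : Prop :=
  ∃ m : ℕ, 3 ≤ m ∧ ∃ L R : Fin m → Set V,
    (∀ i, (L i).Nonempty) ∧ (∀ i, (R i).Nonempty) ∧ (∀ i, R i ⊆ C) ∧
    (∀ i j, i ≠ j → Disjoint (L i) (L j)) ∧
    (∀ i j, i ≠ j → Disjoint (R i) (R j)) ∧
    (∀ i, Disjoint (L i) C) ∧
    (m ≤ C.ncard) ∧
    (C ∪ ⋃ i, L i) = Set.univ ∧
    (∀ u v : V, G.Adj u v ↔ u ≠ v ∧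
      ((∃ i, u ∈ L i ∧ v ∈ L i) ∨ (u ∈ C ∧ v ∈ C) ∨
       (∃ i, u ∈ L i ∧ v ∈ R i) ∨ (∃ i, v ∈ L i ∧ u ∈ R i)))

lemma exists_walk_of_chain {V : Type} {G : SimpleGraph V} :
    ∀ (l : List V) (a : V), l.Chain G.Adj a → ∃ (b : V) (w : G.Walk a b), w.support = a :: l := by
  intro l
  induction l with
  | nil => exact fun a _ => ⟨a, .nil, rfl⟩
  | cons x t ih =>
    intro a h
    replace h : G.Adj a x ∧ List.Chain G.Adj x t := List.isChain_cons_cons.mp h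
    obtain ⟨b, w, hw⟩ := ih x h.2
    exact ⟨b, .cons h.1 w, by simp [hw]⟩

lemma supp_subset {V : Type} {G : SimpleGraph V} {C : Set V} {m : ℕ}
    (L R : Fin m → Set V)
    (hRC : ∀ i, R i ⊆ C)
    (hLd : ∀ i j, i ≠ j → Disjoint (L i) (L j))
    (hRd : ∀ i j, i ≠ j → Disjoint (R i) (R j))
    (hLC : ∀ i, Disjoint (L i) C)
    (hadj : ∀ u v : V, G.Adj u v ↔ u ≠ v ∧
      ((∃ i, u ∈ L i ∧ v ∈ L i) ∨ (u ∈ C ∧ v ∈ C) ∨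
       (∃ i, u ∈ L i ∧ v ∈ R i) ∨ (∃ i, v ∈ L i ∧ u ∈ R i))) :
    ∀ (n : ℕ) (a b : V) (q : G.Walk a b), q.length = n →
      (∀ d ∈ q.darts, ¬(d.toProd.1 ∈ C ∧ d.toProd.2 ∈ C)) →
      ∀ i, a ∈ L i → ∀ x ∈ q.support, x ∈ L i ∪ R i := by
  intro n
  induction n using Nat.strong_induction_on with
  | _ n ih =>
    intro a b q hlen hCC i ha
    cases q with
    | nil => intro x hx; simp at hx; subst hx; exact Or.inl ha
    | @cons _ b' _ h q' =>
      have haC : a ∉ C := fun hc => (hLC i).ne_of_mem ha hc rfl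
      have hb' : b' ∈ L i ∪ R i := by
        rcases ((hadj a b').1 h).2 with ⟨k, hak, hbk⟩ | ⟨hac, _⟩ | ⟨k, hak, hbk⟩ | ⟨k, _, hak⟩
        · have : k = i := by
            by_contra hne
            exact (hLd k i hne).ne_of_mem hak ha rfl
          exact Or.inl (this ▸ hbk)
        · exact absurd hac haC
        · have : k = i := by
            by_contra hne
            exact (hLd k i hne).ne_of_mem hak ha rfl
          exact Or.inr (this ▸ hbk)
        · exact absurd (hRC k hak) haC
      rcases hb' with hb' | hb'
      · intro x hx
        rw [Walk.support_cons] at hx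
        rcases List.mem_cons.1 hx with rfl | hx
        · exact Or.inl ha
        · exact ih q'.length (by simp [Walk.length_cons] at hlen; omega) b' b q' rfl
            (fun d hd => hCC d (by simp [Walk.darts_cons, hd])) i hb' x hx
      · cases q' with
        | nil =>
          intro x hx
          simp [Walk.support_cons] at hx
          rcases hx with rfl | rfl
          · exact Or.inl ha
          · exact Or.inr hb'
        | @cons _ z _ h2 q'' =>
          have hzC : z ∉ C := fun hz =>
            hCC ⟨(b', z), h2⟩ (by simp [Walk.darts_cons]) ⟨hRC i hb', hz⟩
          have hb'C : b' ∈ C := hRC i hb'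
          have hz : z ∈ L i := by
            rcases ((hadj b' z).1 h2).2 with ⟨k, hak, hbk⟩ | ⟨_, hzc⟩ | ⟨k, hak, _⟩ | ⟨k, hzk, hbk⟩
            · exact absurd rfl ((hLC k).ne_of_mem hak hb'C)
            · exact absurd hzc hzC
            · exact absurd rfl ((hLC k).ne_of_mem hak hb'C)
            · have : k = i := by
                by_contra hne
                exact (hRd k i hne).ne_of_mem hbk hb' rfl
              exact this ▸ hzk
          intro x hx
          simp only [Walk.support_cons, List.mem_cons] at hx
          rcases hx with rfl | rfl | hx
          · exact Or.inl ha
          · exact Or.inr hb'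
          · exact ih q''.length (by simp [Walk.length_cons] at hlen; omega) z b q'' rfl
              (fun d hd => hCC d (by simp [Walk.darts_cons, hd])) i hz x hx

lemma no_CC {V : Type} {G : SimpleGraph V} {C : Set V} {u v c : V} (p : G.Walk u v)
    (hp : p.IsPath) (hmax : ∀ (w x : V) (q : G.Walk w x), q.IsPath → q.length ≤ p.length)
    (hc : c ∈ C) (hcp : c ∉ p.support)
    (hCadj : ∀ a b, a ∈ C → b ∈ C → a ≠ b → G.Adj a b)
    (hvC : v ∉ C) :
    ∀ d ∈ p.darts, ¬(d.toProd.1 ∈ C ∧ d.toProd.2 ∈ C) := by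
  classical
  rintro ⟨⟨y, z⟩, hyz⟩ hd ⟨hyC, hzC⟩
  simp only at hyC hzC
  have hys : y ∈ p.support := Walk.dart_fst_mem_support_of_mem_darts p hd
  have hzs : z ∈ p.support := Walk.dart_snd_mem_support_of_mem_darts p hd
  have hyv : y ≠ v := fun h => hvC (h ▸ hyC)
  set q1 := p.takeUntil y hys with hq1
  set q2 := p.dropUntil y hys with hq2
  have hspec : q1.append q2 = p := Walk.take_spec p hys
  obtain ⟨z', hadj', q3, hq2eq⟩ := Walk.exists_eq_cons_of_ne hyv q2
  -- z' = z
  have hz' : z' = z := by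
    have h1 : (⟨(y, z'), hadj'⟩ : G.Dart) ∈ p.darts := by
      rw [← hspec, Walk.darts_append]
      simp [hq2eq]
    have hnd : (p.darts.map (·.fst)).Nodup := by
      rw [Walk.map_fst_darts]
      exact List.Nodup.sublist (List.dropLast_sublist _) hp.support_nodup
    have := List.inj_on_of_nodup_map hnd h1 hd rfl
    exact congrArg (fun d : G.Dart => d.toProd.2) this
  subst hz'
  have hcy : c ≠ y := fun h => hcp (h ▸ hys)
  have hcz : c ≠ z' := fun h => hcp (h ▸ hzs)
  set w : G.Walk u v :=
    q1.append (Walk.cons (hCadj y c hyC hc hcy.symm) (Walk.cons (hCadj c z' hc hzC hcz) q3))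
    with hw
  have hsupold : p.support = q1.support ++ q3.support := by
    rw [← hspec, Walk.support_append, hq2eq, Walk.support_cons]
    rfl
  have hsupnew : w.support = q1.support ++ (c :: q3.support) := by
    rw [hw, Walk.support_append, Walk.support_cons, Walk.support_cons]
    rfl
  have hwpath : w.IsPath := by
    rw [Walk.isPath_def, hsupnew]
    have hold : (q1.support ++ q3.support).Nodup := by
      rw [← hsupold]; exact hp.support_nodup
    have hcnot : c ∉ q1.support ++ q3.support := by rw [← hsupold]; exact hcp
    simp only [List.nodup_append', List.nodup_cons, List.mem_append, not_or] at hold hcnot ⊢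
    refine ⟨hold.1, ⟨hcnot.2, hold.2.1⟩, ?_⟩
    intro a ha
    simp only [List.mem_cons, not_or]
    exact fun h => h.elim (fun h => hcnot.1 (h ▸ ha)) (fun h => hold.2.2 ha h)
  have hlen : w.length = p.length + 1 := by
    rw [hw, ← hspec, Walk.length_append, Walk.length_append, hq2eq]
    simp [Walk.length_cons]
    omega
  have := hmax u v w hwpath
  omega

theorem generalized_comb_longest_paths {V : Type} [Fintype V] (G : SimpleGraph V)
    (C : Set V) (hcomb : IsGeneralizedComb G C) :
    (∀ (u v : V) (p : G.Walk u v), IsLongestPath G p → ∀ c ∈ C, c ∈ p.support) ∧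
      ∃ a : V, ∀ (u v : V) (p : G.Walk u v), IsLongestPath G p → a ∈ p.support := by
  classical
  obtain ⟨m, hm, L, R, hLne, hRne, hRC, hLd, hRd, hLC, hmC, hcover, hadj⟩ := hcomb
  have hCadj : ∀ a b, a ∈ C → b ∈ C → a ≠ b → G.Adj a b := fun a b ha hb hne =>
    (hadj a b).2 ⟨hne, Or.inr (Or.inl ⟨ha, hb⟩)⟩
  have main : ∀ (u v : V) (p : G.Walk u v), IsLongestPath G p → ∀ c ∈ C, c ∈ p.support := by
    rintro u v p ⟨hp, hmax⟩ c hcC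
    by_contra hcp
    -- endpoints not in C
    have huC : u ∉ C := by
      intro huC
      have hcu : c ≠ u := fun h => hcp (h ▸ p.start_mem_support)
      have hpath : (Walk.cons (hCadj c u hcC huC hcu) p).IsPath := hp.cons hcp
      have := hmax _ _ _ hpath
      simp [Walk.length_cons] at this
    have hvC : v ∉ C := by
      intro hvC
      have hcv : c ≠ v := fun h => hcp (h ▸ p.end_mem_support)
      have hpath : (Walk.cons (hCadj c v hcC hvC hcv) p.reverse).IsPath := by
        refine (hp.reverse).cons ?_
        rwa [Walk.support_reverse, List.mem_reverse]
      have := hmax _ _ _ hpath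
      simp [Walk.length_cons, Walk.length_reverse] at this
    obtain ⟨i, hui⟩ : ∃ i, u ∈ L i := by
      have hu : u ∈ C ∪ ⋃ i, L i := hcover ▸ Set.mem_univ u
      rcases hu with hu | hu
      · exact absurd hu huC
      · simpa using hu
    have hnoCC := no_CC p hp hmax hcC hcp hCadj hvC
    have hsub : ∀ x ∈ p.support, x ∈ L i ∪ R i :=
      supp_subset L R hRC hLd hRd hLC hadj p.length u v p rfl hnoCC i hui
    have hsup : ∀ w ∈ L i ∪ R i, w ∈ p.support := by
      intro w hw; by_contra hwp
      have hwu : w ≠ u := fun h => hwp (h ▸ p.start_mem_support)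
      have hadjwu : G.Adj w u := by
        rcases hw with hw | hw
        · exact (hadj w u).2 ⟨hwu, Or.inl ⟨i, hw, hui⟩⟩
        · exact (hadj w u).2 ⟨hwu, Or.inr (Or.inr (Or.inr ⟨i, hui, hw⟩))⟩
      have := hmax _ _ (Walk.cons hadjwu p) (hp.cons hwp)
      simp [Walk.length_cons] at this
    have hset : L i ∪ R i = ↑p.support.toFinset := by
      ext x
      simp only [List.coe_toFinset, Set.mem_setOf_eq]
      exact ⟨hsup x, hsub x⟩
    -- cardinalities
    have hLfin : (L i).Finite := Set.toFinite _
    have hRfin : (R i).Finite := Set.toFinite _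
    have hdisj : Disjoint (L i) (R i) := (hLC i).mono_right (hRC i)
    have hcard : p.length + 1 = (L i).ncard + (R i).ncard := by
      have h1 : (L i ∪ R i).ncard = (L i).ncard + (R i).ncard :=
        Set.ncard_union_eq hdisj hLfin hRfin
      have h2 : (L i ∪ R i).ncard = p.support.toFinset.card := by
        rw [hset, Set.ncard_coe_finset]
      have h3 : p.support.toFinset.card = p.support.length :=
        List.toFinset_card_of_nodup hp.support_nodup
      have h4 : p.support.length = p.length + 1 := Walk.length_support p
      omega
    -- build competitor
    set lL := hLfin.toFinset.toList with hlL
    set lR := hRfin.toFinset.toList with hlR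
    have hmemL : ∀ x, x ∈ lL ↔ x ∈ L i := by
      intro x; rw [hlL, Finset.mem_toList, Set.Finite.mem_toFinset]
    have hmemR : ∀ x, x ∈ lR ↔ x ∈ R i := by
      intro x; rw [hlR, Finset.mem_toList, Set.Finite.mem_toFinset]
    have hlLlen : lL.length = (L i).ncard := by
      rw [hlL, Finset.length_toList, Set.ncard_eq_toFinset_card _ hLfin]
    have hlRlen : lR.length = (R i).ncard := by
      rw [hlR, Finset.length_toList, Set.ncard_eq_toFinset_card _ hRfin]
    have hlLnd : lL.Nodup := Finset.nodup_toList _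
    have hlRnd : lR.Nodup := Finset.nodup_toList _
    have hcR : c ∉ R i := fun h => hcp (hsup c (Or.inr h))
    have hcL : c ∉ L i := fun h => (hLC i).ne_of_mem h hcC rfl
    -- chains
    have chainClique : ∀ (l : List V) (S : Set V), l.Nodup → (∀ x ∈ l, x ∈ S) →
        (∀ a b, a ∈ S → b ∈ S → a ≠ b → G.Adj a b) → l.Chain' G.Adj := by
      intro l S hnd hmem hS
      have hpw : l.Pairwise G.Adj := by
        rw [List.pairwise_iff_forall_sublist]
        intro a b hsub
        have hne : a ≠ b := List.pairwise_iff_forall_sublist.mp hnd hsub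
        exact hS a b (hmem a (hsub.subset (by simp))) (hmem b (hsub.subset (by simp))) hne
      exact hpw.isChain
    have hLadj : ∀ a b, a ∈ L i → b ∈ L i → a ≠ b → G.Adj a b := fun a b ha hb hne =>
      (hadj a b).2 ⟨hne, Or.inl ⟨i, ha, hb⟩⟩
    -- the competitor list
    set full : List V := lL ++ (lR ++ [c]) with hfull
    have hfullnd : full.Nodup := by
      have h1 : (lR ++ [c]).Nodup := by
        rw [List.nodup_append']
        refine ⟨hlRnd, List.nodup_singleton c, ?_⟩
        intro a ha hb
        simp only [List.mem_singleton] at hb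
        subst hb
        exact hcR ((hmemR a).1 ha)
      rw [hfull, List.nodup_append']
      refine ⟨hlLnd, h1, ?_⟩
      intro a ha hb
      have haL := (hmemL a).1 ha
      rcases List.mem_append.1 hb with hb | hb
      · exact hdisj.ne_of_mem haL ((hmemR a).1 hb) rfl
      · simp only [List.mem_singleton] at hb
        subst hb
        exact hcL haL
    have hfullchain : full.Chain' G.Adj := by
      rw [hfull]
      show List.IsChain G.Adj (lL ++ (lR ++ [c]))
      rw [List.isChain_append]
      refine ⟨chainClique lL (L i) hlLnd (fun x hx => (hmemL x).1 hx) hLadj, ?_, ?_⟩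
      · rw [List.isChain_append]
        refine ⟨chainClique lR C hlRnd (fun x hx => hRC i ((hmemR x).1 hx)) hCadj,
          List.isChain_singleton c, ?_⟩
        intro x hx y hy
        have hyc : c = y := by simpa using hy
        obtain ⟨h1, h2⟩ := List.mem_getLast?_eq_getLast hx
        have hxR : x ∈ R i := (hmemR x).1 (h2 ▸ List.getLast_mem h1)
        exact hyc ▸ hCadj x c (hRC i hxR) hcC (fun h => hcR (h ▸ hxR))
      · intro x hx y hy
        obtain ⟨h1, h2⟩ := List.mem_getLast?_eq_getLast hx
        have hxL : x ∈ L i := (hmemL x).1 (h2 ▸ List.getLast_mem h1)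
        have hyR : y ∈ R i := by
          obtain ⟨r, tR, hRt⟩ : ∃ r tR, lR = r :: tR := by
            obtain ⟨r, hr⟩ := hRne i
            have : r ∈ lR := (hmemR r).2 hr
            cases hlRcase : lR with
            | nil => rw [hlRcase] at this; simp at this
            | cons r' tR => exact ⟨r', tR, rfl⟩
          rw [hRt] at hy
          have hyr : r = y := by simpa using hy
          exact hyr ▸ (hmemR r).1 (by rw [hRt]; exact List.mem_cons_self)
        exact (hadj x y).2 ⟨fun h => (hLC i).ne_of_mem hxL (hRC i (h ▸ hyR)) rfl,
          Or.inr (Or.inr (Or.inl ⟨i, hxL, hyR⟩))⟩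
    obtain ⟨x, tL, hLt⟩ : ∃ x tL, lL = x :: tL := by
      obtain ⟨x, hx⟩ := hLne i
      have : x ∈ lL := (hmemL x).2 hx
      cases hlLcase : lL with
      | nil => rw [hlLcase] at this; simp at this
      | cons x' tL => exact ⟨x', tL, rfl⟩
    have hchain : (tL ++ (lR ++ [c])).Chain G.Adj x := by
      rw [hfull, hLt] at hfullchain
      exact hfullchain
    obtain ⟨b, w, hwsup⟩ := exists_walk_of_chain _ x hchain
    have hwfull : w.support = full := by rw [hwsup, hfull, hLt]; simp
    have hwpath : w.IsPath := by
      rw [Walk.isPath_def, hwfull]; exact hfullnd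
    have hwlen : w.length + 1 = (L i).ncard + (R i).ncard + 1 := by
      have h1 : w.support.length = w.length + 1 := Walk.length_support w
      rw [hwfull] at h1
      simp only [hfull, List.length_append, List.length_singleton] at h1
      omega
    have := hmax _ _ w hwpath
    omega
  refine ⟨main, ?_⟩
  have hCne : C.Nonempty := by
    rw [← Set.ncard_pos]
    omega
  obtain ⟨a, ha⟩ := hCne
  exact ⟨a, fun u v p hp => main u v p hp a ha⟩
end

section
/- Let G be a finite connected simple graph with at least two vertices. Then there exists a block B of G such that every longest path of G contains at least one vertex of B. -/
open SimpleGraph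

section BlockAux

variable {V : Type} {G : SimpleGraph V}

/-- Reachability within a vertex set. -/
def ReachIn (G : SimpleGraph V) (W : Set V) (x y : V) : Prop :=
  ∃ w : G.Walk x y, ∀ z ∈ w.support, z ∈ W

namespace ReachIn

lemma mem_left {W : Set V} {x y : V} (h : ReachIn G W x y) : x ∈ W := by
  obtain ⟨w, hw⟩ := h; exact hw x w.start_mem_support

lemma mem_right {W : Set V} {x y : V} (h : ReachIn G W x y) : y ∈ W := by
  obtain ⟨w, hw⟩ := h; exact hw y w.end_mem_support

lemma refl {W : Set V} {x : V} (hx : x ∈ W) : ReachIn G W x x :=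
  ⟨Walk.nil, by simpa using hx⟩

lemma symm {W : Set V} {x y : V} (h : ReachIn G W x y) : ReachIn G W y x := by
  obtain ⟨w, hw⟩ := h
  exact ⟨w.reverse, fun z hz => hw z (by simpa [Walk.support_reverse] using hz)⟩

lemma trans {W : Set V} {x y z : V} (h : ReachIn G W x y) (h' : ReachIn G W y z) :
    ReachIn G W x z := by
  obtain ⟨w, hw⟩ := h; obtain ⟨w', hw'⟩ := h'
  refine ⟨w.append w', fun t ht => ?_⟩
  rcases (Walk.mem_support_append_iff _ _).1 ht with h | h
  · exact hw t h
  · exact hw' t h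

lemma mono {W W' : Set V} {x y : V} (hW : W ⊆ W') (h : ReachIn G W x y) :
    ReachIn G W' x y := by
  obtain ⟨w, hw⟩ := h; exact ⟨w, fun z hz => hW (hw z hz)⟩

end ReachIn

lemma reachIn_of_induce {W : Set V} {a b : ↥W} (h : (G.induce W).Reachable a b) :
    ReachIn G W a.1 b.1 := by
  obtain ⟨w⟩ := h
  refine ⟨w.map (SimpleGraph.Embedding.induce W).toHom, fun z hz => ?_⟩
  change z ∈ (w.map (SimpleGraph.Embedding.induce W).toHom).support at hz
  rw [Walk.support_map] at hz
  obtain ⟨t, _, rfl⟩ := List.mem_map.1 hz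
  exact t.2

lemma induce_reachable_aux {W : Set V} : ∀ {a b : V} (w : G.Walk a b)
    (hw : ∀ z ∈ w.support, z ∈ W),
    (G.induce W).Reachable ⟨a, hw a w.start_mem_support⟩ ⟨b, hw b w.end_mem_support⟩ := by
  intro a b w
  induction w with
  | nil => exact fun _ => Reachable.refl _
  | @cons u v w h p ih =>
    intro hw
    have hv : v ∈ W := hw v (by simp)
    have hu : u ∈ W := hw u (by simp)
    refine Reachable.trans (Adj.reachable (u := (⟨u, hu⟩ : ↥W)) (v := ⟨v, hv⟩) h) ?_
    exact ih (fun z hz => hw z (by simp [hz]))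

lemma induce_reachable_of_reachIn {W : Set V} {a b : V} (h : ReachIn G W a b)
    (ha : a ∈ W) (hb : b ∈ W) : (G.induce W).Reachable ⟨a, ha⟩ ⟨b, hb⟩ := by
  obtain ⟨w, hw⟩ := h
  exact induce_reachable_aux w hw

lemma preconnected_induce_iff {W : Set V} :
    (G.induce W).Preconnected ↔ ∀ x ∈ W, ∀ y ∈ W, ReachIn G W x y := by
  constructor
  · intro h x hx y hy; exact reachIn_of_induce (h ⟨x, hx⟩ ⟨y, hy⟩)
  · intro h a b; exact induce_reachable_of_reachIn (h a.1 a.2 b.1 b.2) a.2 b.2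

lemma connected_induce_iff {W : Set V} :
    (G.induce W).Connected ↔ W.Nonempty ∧ ∀ x ∈ W, ∀ y ∈ W, ReachIn G W x y := by
  rw [connected_iff, _root_.preconnected_induce_iff, Set.nonempty_coe_sort, and_comm]

/-- A connected vertex set with no internal cutvertex, phrased via `ReachIn`. -/
def NoCut (G : SimpleGraph V) (B : Set V) : Prop :=
  B.Nonempty ∧ (∀ x ∈ B, ∀ y ∈ B, ReachIn G B x y) ∧
    ∀ c : V, ∀ x ∈ B \ {c}, ∀ y ∈ B \ {c}, ReachIn G (B \ {c}) x y

lemma noCut_pair {a b : V} (hab : G.Adj a b) : NoCut G {a, b} := by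
  have hne : a ≠ b := hab.ne
  have edge : ∀ {x y : V} (W : Set V), x ∈ W → y ∈ W → G.Adj x y → ReachIn G W x y := by
    intro x y W hx hy hadj
    refine ⟨Walk.cons hadj Walk.nil, fun z hz => ?_⟩
    simp only [Walk.support_cons, Walk.support_nil, List.mem_cons, List.mem_singleton] at hz
    rcases hz with rfl | rfl | h
    exacts [hx, hy, absurd h List.not_mem_nil]
  refine ⟨⟨a, by simp⟩, ?_, ?_⟩
  · rintro x (rfl | rfl) y (rfl | rfl)
    · exact ReachIn.refl (by simp)
    · exact edge _ (by simp) (by simp) hab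
    · exact edge _ (by simp) (by simp) hab.symm
    · exact ReachIn.refl (by simp)
  · rintro c x ⟨(rfl | rfl), hxc⟩ y ⟨(rfl | rfl), hyc⟩
    · exact ReachIn.refl ⟨by simp, hxc⟩
    · exact edge _ ⟨by simp, hxc⟩ ⟨by simp, hyc⟩ hab
    · exact edge _ ⟨by simp, hxc⟩ ⟨by simp, hyc⟩ hab.symm
    · exact ReachIn.refl ⟨by simp, hxc⟩

lemma exists_maximal_noCut [Fintype V] (U B₀ : Set V) (h₀ : B₀ ⊆ U) (hnc : NoCut G B₀) :
    ∃ B : Set V, B₀ ⊆ B ∧ B ⊆ U ∧ NoCut G B ∧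
      ∀ B', B ⊆ B' → B' ⊆ U → NoCut G B' → B' = B := by
  obtain ⟨B, hB, hmax⟩ := Set.Finite.exists_maximalFor id
    {B : Set V | B₀ ⊆ B ∧ B ⊆ U ∧ NoCut G B} (Set.toFinite _) ⟨B₀, subset_rfl, h₀, hnc⟩
  exact ⟨B, hB.1, hB.2.1, hB.2.2, fun B' h1 h2 h3 =>
    subset_antisymm (hmax ⟨hB.1.trans h1, h2, h3⟩ h1) h1⟩

section Restrict

variable {U A : Set V} {c : V}

/-- Entry lemma: a walk from outside `{c} ∪ A` into `{c} ∪ A` staying in `U`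
must enter through `c`. -/
lemma entry_through_c (hstep : ∀ a ∈ A, ∀ z, G.Adj a z → z ∈ U → z ≠ c → z ∈ A) :
    ∀ {z y : V} (w : G.Walk z y), z ∉ insert c A → y ∈ insert c A →
      (∀ t ∈ w.support, t ∈ U) →
      ∃ w' : G.Walk c y, w'.length < w.length ∧ ∀ t ∈ w'.support, t ∈ w.support := by
  intro z y w
  induction w with
  | nil => intro hz hy _; exact absurd hy hz
  | @cons u v w h p ih =>
    intro hz hy hU
    by_cases hv : v ∈ insert c A
    · rcases hv with rfl | hvA
      · exact ⟨p, by simp, fun t ht => by simp [ht]⟩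
      · exact absurd (Set.mem_insert_iff.mpr (Or.inr
          (hstep v hvA u h.symm (hU u (by simp)) (fun hc => hz (by simp [hc])))) ) hz
    · obtain ⟨w', hlt, hsub⟩ := ih hv hy (fun t ht => hU t (by simp [ht]))
      exact ⟨w', by simpa using Nat.lt_succ_of_lt hlt,
        fun t ht => by simp [hsub t ht]⟩

/-- Restriction lemma: a connected set restricted to `{c} ∪ A` stays connected. -/
lemma reachIn_restrict (hstep : ∀ a ∈ A, ∀ z, G.Adj a z → z ∈ U → z ≠ c → z ∈ A) :
    ∀ (n : ℕ) (S : Set V), S ⊆ U → ∀ {x y : V} (w : G.Walk x y), w.length ≤ n →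
      (∀ t ∈ w.support, t ∈ S) → x ∈ insert c A → y ∈ insert c A →
      ReachIn G (S ∩ insert c A) x y := by
  intro n
  induction n with
  | zero =>
    intro S hSU x y w hw hsup hx hy
    cases w with
    | nil => exact ReachIn.refl ⟨hsup x (by simp), hx⟩
    | cons h p => simp at hw
  | succ n IH =>
    intro S hSU x y w hw hsup hx hy
    cases w with
    | nil => exact ReachIn.refl ⟨hsup x (by simp), hx⟩
    | @cons _ v _ h p =>
      by_cases hv : v ∈ insert c A
      · refine ReachIn.trans ⟨Walk.cons h Walk.nil, ?_⟩
          (IH S hSU p (by simpa using hw) (fun t ht => hsup t (by simp [ht])) hv hy)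
        intro t ht
        simp only [Walk.support_cons, Walk.support_nil, List.mem_cons,
          List.mem_singleton] at ht
        rcases ht with rfl | rfl | hf
        · exact ⟨hsup t (by simp), hx⟩
        · exact ⟨hsup t (by simp), hv⟩
        · exact absurd hf List.not_mem_nil
      · -- the walk leaves `{c} ∪ A`; then `x = c` and it must re-enter through `c`.
        have hu : x = c := by
          rcases hx with rfl | huA
          · rfl
          · exact absurd (Set.mem_insert_iff.mpr (Or.inr (hstep x huA v h
              (hSU (hsup v (by simp))) (fun hc => hv (by simp [hc]))))) hv
        subst hu
        obtain ⟨w', hlt, hsub⟩ := entry_through_c hstep p hv hy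
          (fun t ht => hSU (hsup t (by simp [ht])))
        have hlen : w'.length ≤ n := by
          have : p.length ≤ n := by simpa using hw
          omega
        exact IH S hSU w' hlen
          (fun t ht => hsup t (by simp [hsub t ht])) hx hy

end Restrict

lemma edge_reachIn {W : Set V} {x y : V} (hx : x ∈ W) (hy : y ∈ W) (h : G.Adj x y) :
    ReachIn G W x y := by
  refine ⟨Walk.cons h Walk.nil, fun z hz => ?_⟩
  simp only [Walk.support_cons, Walk.support_nil, List.mem_cons, List.mem_singleton] at hz
  rcases hz with rfl | rfl | hf
  exacts [hx, hy, absurd hf List.not_mem_nil]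

lemma key_induction [Fintype V] (G : SimpleGraph V) :
    ∀ (n : ℕ) (U : Set V), U.ncard ≤ n → 2 ≤ U.ncard →
      (∀ x ∈ U, ∀ y ∈ U, ReachIn G U x y) →
      ∀ P : Set (Set V),
        (∀ S ∈ P, S.Nonempty ∧ S ⊆ U ∧ ∀ x ∈ S, ∀ y ∈ S, ReachIn G S x y) →
        (∀ S ∈ P, ∀ T ∈ P, (S ∩ T).Nonempty) →
        ∃ B : Set V, B ⊆ U ∧ 2 ≤ B.ncard ∧ NoCut G B ∧
          (∀ B', B ⊆ B' → B' ⊆ U → NoCut G B' → B' = B) ∧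
          ∀ S ∈ P, (B ∩ S).Nonempty := by
  intro n
  induction n with
  | zero =>
    intro U h1 h2 _ _ _ _
    exact ((Nat.not_succ_le_zero 1) (h2.trans h1)).elim
  | succ n IH =>
    intro U hUn hU2 hUconn P hP hPint
    by_cases hcut : ∀ c : V, ∀ x ∈ U \ {c}, ∀ y ∈ U \ {c}, ReachIn G (U \ {c}) x y
    · -- `U` itself has no cutvertex: it is its own block.
      refine ⟨U, subset_rfl, hU2,
        ⟨Set.nonempty_of_ncard_ne_zero (s := U) (by omega), hUconn, hcut⟩,
        fun B' h1 h2 _ => subset_antisymm h2 h1, fun S hS => ?_⟩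
      obtain ⟨s, hs⟩ := (hP S hS).1
      exact ⟨s, (hP S hS).2.1 hs, hs⟩
    · push_neg at hcut
      obtain ⟨c, x₁, hx₁, y₁, hy₁, hnr⟩ := hcut
      have hcU : c ∈ U := by
        by_contra hc
        have he : U \ {c} = U := Set.diff_singleton_eq_self hc
        exact hnr (by rw [he]; exact hUconn x₁ hx₁.1 y₁ hy₁.1)
      by_cases hall : ∀ S ∈ P, c ∈ S
      · -- `c` is on every set of the family: take a maximal block through `c`.
        obtain ⟨e, heU, hec⟩ := Set.exists_ne_of_one_lt_ncard (s := U) (by omega) c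
        obtain ⟨w, hw⟩ := hUconn c hcU e heU
        cases w with
        | nil => exact absurd rfl hec.symm
        | @cons _ v _ h p =>
          have hvU : v ∈ U := hw v (by simp)
          obtain ⟨B, hB₀B, hBU, hBnc, hBmax⟩ := exists_maximal_noCut U {c, v}
            (Set.insert_subset_iff.2 ⟨hcU, Set.singleton_subset_iff.2 hvU⟩) (noCut_pair h)
          refine ⟨B, hBU, ?_, hBnc, hBmax, fun S hS => ⟨c, hB₀B (by simp), hall S hS⟩⟩
          calc 2 = ({c, v} : Set V).ncard := (Set.ncard_pair h.ne).symm
            _ ≤ B.ncard := Set.ncard_le_ncard hB₀B (Set.toFinite B)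
      · push_neg at hall
        obtain ⟨S₀, hS₀P, hcS₀⟩ := hall
        obtain ⟨hS₀ne, hS₀U, hS₀conn⟩ := hP S₀ hS₀P
        obtain ⟨x₀, hx₀⟩ := hS₀ne
        set A : Set V := {y | ReachIn G (U \ {c}) x₀ y} with hAdef
        have hAU : A ⊆ U \ {c} := fun y hy => hy.mem_right
        have hstep : ∀ a ∈ A, ∀ z, G.Adj a z → z ∈ U → z ≠ c → z ∈ A := by
          intro a ha z haz hzU hzc
          exact ReachIn.trans ha (edge_reachIn (hAU ha) ⟨hzU, hzc⟩ haz)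
        have hSdiff : ∀ S ∈ P, c ∉ S → S ⊆ U \ {c} := by
          intro S hS hcS z hz
          exact ⟨(hP S hS).2.1 hz, fun he => hcS (he ▸ hz)⟩
        have hx₀A : x₀ ∈ A := ReachIn.refl (hSdiff S₀ hS₀P hcS₀ hx₀)
        have hS₀A : S₀ ⊆ A := fun s hs =>
          (hS₀conn x₀ hx₀ s hs).mono (hSdiff S₀ hS₀P hcS₀)
        have hSA : ∀ S ∈ P, c ∉ S → S ⊆ A := by
          intro S hS hcS s hs
          obtain ⟨t, htS, htS₀⟩ := hPint S hS S₀ hS₀P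
          exact ReachIn.trans (hS₀A htS₀)
            (((hP S hS).2.2 t htS s hs).mono (hSdiff S hS hcS))
        have hclAU : insert c A ⊆ U := Set.insert_subset_iff.2 ⟨hcU, hAU.trans Set.diff_subset⟩
        -- the other side of the cut is nonempty
        have hb : ∃ b ∈ U, b ∉ insert c A := by
          by_contra hcon
          push_neg at hcon
          have hx₁A : x₁ ∈ A := ((hcon x₁ hx₁.1).resolve_left hx₁.2)
          have hy₁A : y₁ ∈ A := ((hcon y₁ hy₁.1).resolve_left hy₁.2)
          exact hnr (ReachIn.trans hx₁A.symm hy₁A)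
        obtain ⟨b, hbU, hbA⟩ := hb
        have hlt : (insert c A).ncard < U.ncard :=
          Set.ncard_lt_ncard ((Set.ssubset_iff_of_subset hclAU).2 ⟨b, hbU, hbA⟩)
            (Set.toFinite U)
        have hx₀c : x₀ ≠ c := (hSdiff S₀ hS₀P hcS₀ hx₀).2
        have h2clA : 2 ≤ (insert c A).ncard := by
          calc 2 = ({c, x₀} : Set V).ncard := (Set.ncard_pair (Ne.symm hx₀c)).symm
            _ ≤ (insert c A).ncard := Set.ncard_le_ncard
                (Set.insert_subset_insert (Set.singleton_subset_iff.2 hx₀A)) (Set.toFinite _)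
        have hclAconn : ∀ x ∈ insert c A, ∀ y ∈ insert c A, ReachIn G (insert c A) x y := by
          intro x hx y hy
          obtain ⟨w, hw⟩ := hUconn x (hclAU hx) y (hclAU hy)
          have := reachIn_restrict hstep w.length U subset_rfl w le_rfl hw hx hy
          rwa [Set.inter_eq_self_of_subset_right hclAU] at this
        -- restricted family
        set P' : Set (Set V) := (fun S => S ∩ insert c A) '' P with hP'def
        have hP' : ∀ S' ∈ P', S'.Nonempty ∧ S' ⊆ insert c A ∧
            ∀ x ∈ S', ∀ y ∈ S', ReachIn G S' x y := by
          rintro _ ⟨S, hS, rfl⟩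
          refine ⟨?_, Set.inter_subset_right, ?_⟩
          · obtain ⟨t, htS, htS₀⟩ := hPint S hS S₀ hS₀P
            exact ⟨t, htS, Set.mem_insert_iff.2 (Or.inr (hS₀A htS₀))⟩
          · intro x hx y hy
            obtain ⟨w, hw⟩ := (hP S hS).2.2 x hx.1 y hy.1
            exact reachIn_restrict hstep w.length S (hP S hS).2.1 w le_rfl hw hx.2 hy.2
        have hP'int : ∀ S' ∈ P', ∀ T' ∈ P', (S' ∩ T').Nonempty := by
          rintro _ ⟨S, hS, rfl⟩ _ ⟨T, hT, rfl⟩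
          by_cases hcS : c ∈ S
          · by_cases hcT : c ∈ T
            · exact ⟨c, ⟨hcS, Set.mem_insert _ _⟩, ⟨hcT, Set.mem_insert _ _⟩⟩
            · obtain ⟨t, htS, htT⟩ := hPint S hS T hT
              have : t ∈ A := hSA T hT hcT htT
              exact ⟨t, ⟨htS, Set.mem_insert_iff.2 (Or.inr this)⟩,
                ⟨htT, Set.mem_insert_iff.2 (Or.inr this)⟩⟩
          · obtain ⟨t, htS, htT⟩ := hPint S hS T hT
            have : t ∈ A := hSA S hS hcS htS
            exact ⟨t, ⟨htS, Set.mem_insert_iff.2 (Or.inr this)⟩,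
              ⟨htT, Set.mem_insert_iff.2 (Or.inr this)⟩⟩
        obtain ⟨B, hBclA, hB2, hBnc, hBmax, hBmeets⟩ :=
          IH (insert c A) (by omega) h2clA hclAconn P' hP' hP'int
        refine ⟨B, hBclA.trans hclAU, hB2, hBnc, ?_, ?_⟩
        · -- maximality transfers from `insert c A` to `U`
          intro B' hBB' hB'U hB'nc
          refine hBmax B' hBB' ?_ hB'nc
          intro z hz
          by_cases hzc : z = c
          · exact hzc ▸ Set.mem_insert _ _
          · obtain ⟨a₁, ha₁, a₂, ha₂, hne⟩ := (Set.one_lt_ncard (Set.toFinite B)).1 hB2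
            have hbb : ∃ bb ∈ B, bb ≠ c := by
              by_cases h1 : a₁ = c
              · exact ⟨a₂, ha₂, fun h2 => hne (h1 ▸ h2 ▸ rfl)⟩
              · exact ⟨a₁, ha₁, h1⟩
            obtain ⟨bb, hbbB, hbbc⟩ := hbb
            have hbbA : bb ∈ A := (hBclA hbbB).resolve_left hbbc
            have hreach : ReachIn G (B' \ {c}) bb z :=
              hB'nc.2.2 c bb ⟨hBB' hbbB, hbbc⟩ z ⟨hz, hzc⟩
            have : z ∈ A := ReachIn.trans hbbA
              (hreach.mono (Set.diff_subset_diff_left hB'U))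
            exact Set.mem_insert_iff.2 (Or.inr this)
        · intro S hS
          obtain ⟨t, htB, htS, _⟩ := hBmeets (S ∩ insert c A) ⟨S, hS, rfl⟩
          exact ⟨t, htB, htS⟩

lemma isPath_append_of {u v w : V} {p : G.Walk u v} {q : G.Walk v w}
    (hp : p.IsPath) (hq : q.IsPath)
    (h : ∀ t, t ∈ p.support → t ∈ q.support → t = v) : (p.append q).IsPath := by
  rw [Walk.isPath_def, Walk.support_append]
  have hq' := hq.support_nodup
  rw [q.support_eq_cons, List.nodup_cons] at hq'
  refine List.Nodup.append hp.support_nodup hq'.2 ?_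
  intro t htp htq
  have htq' : t ∈ q.support := by rw [q.support_eq_cons]; exact List.mem_cons_of_mem _ htq
  exact hq'.1 (h t htp htq' ▸ htq)

lemma longest_paths_intersect (hpre : G.Preconnected) {u v w x : V}
    {p : G.Walk u v} {q : G.Walk w x}
    (hp : IsLongestPath G p) (hq : IsLongestPath G q) :
    ∃ z, z ∈ p.support ∧ z ∈ q.support := by
  classical
  by_contra hdisj
  push_neg at hdisj
  have hex : ∃ m : ℕ, ∃ y z : V, ∃ r : G.Walk y z,
      r.IsPath ∧ y ∈ p.support ∧ z ∈ q.support ∧ r.length = m := by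
    obtain ⟨r0⟩ := hpre u w
    exact ⟨r0.bypass.length, u, w, r0.bypass, r0.bypass_isPath,
      p.start_mem_support, q.start_mem_support, rfl⟩
  obtain ⟨y, z, r, hr, hyp, hzq, hlen⟩ := Nat.find_spec hex
  have hminimal := fun k hk => Nat.find_min hex (m := k) hk
  -- internal vertices of `r` avoid both paths
  have hclaimP : ∀ t ∈ r.support, t ∈ p.support → t = y := by
    intro t htr htp
    by_contra hty
    have hspec := congrArg Walk.length (r.take_spec htr)
    rw [Walk.length_append] at hspec
    have h0 : (r.takeUntil t htr).length ≠ 0 := fun h0 =>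
      hty ((r.takeUntil t htr).eq_of_length_eq_zero h0).symm
    refine hminimal (r.dropUntil t htr).length (by omega)
      ⟨t, z, r.dropUntil t htr, hr.dropUntil htr, htp, hzq, rfl⟩
  have hclaimQ : ∀ t ∈ r.support, t ∈ q.support → t = z := by
    intro t htr htq
    by_contra htz
    have hspec := congrArg Walk.length (r.take_spec htr)
    rw [Walk.length_append] at hspec
    have h0 : (r.dropUntil t htr).length ≠ 0 := fun h0 =>
      htz ((r.dropUntil t htr).eq_of_length_eq_zero h0)
    refine hminimal (r.takeUntil t htr).length (by omega)
      ⟨y, t, r.takeUntil t htr, hr.takeUntil htr, hyp, htq, rfl⟩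
  have hyz : y ≠ z := fun h => hdisj y hyp (h ▸ hzq)
  have hm1 : 1 ≤ r.length := by
    rcases Nat.eq_zero_or_pos r.length with h0 | h1
    · exact absurd (r.eq_of_length_eq_zero h0) hyz
    · exact h1
  have hLq : q.length = p.length := le_antisymm (hp.2 _ _ q hq.1) (hq.2 _ _ p hp.1)
  have main : ∀ {a b : V} (ps : G.Walk a y) (qs : G.Walk z b), ps.IsPath → qs.IsPath →
      (∀ t ∈ ps.support, t ∈ p.support) → (∀ t ∈ qs.support, t ∈ q.support) →
      p.length ≤ 2 * ps.length → q.length ≤ 2 * qs.length → False := by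
    intro a b ps qs hps hqs hpsub hqsub hpl hql
    have hrq : (r.append qs).IsPath := isPath_append_of hr hqs
      (fun t htr htq => hclaimQ t htr (hqsub t htq))
    have hW : (ps.append (r.append qs)).IsPath := by
      refine isPath_append_of hps hrq (fun t htp htrq => ?_)
      rcases (Walk.mem_support_append_iff _ _).1 htrq with h | h
      · exact hclaimP t h (hpsub t htp)
      · exact absurd (hqsub t h) (hdisj t (hpsub t htp))
    have hle := hp.2 _ _ _ hW
    rw [Walk.length_append, Walk.length_append] at hle
    omega
  have hpspec := congrArg Walk.length (p.take_spec hyp)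
  rw [Walk.length_append] at hpspec
  have hqspec := congrArg Walk.length (q.take_spec hzq)
  rw [Walk.length_append] at hqspec
  have hp1 := hp.1.takeUntil hyp
  have hp2 := hp.1.dropUntil hyp
  have hq1 := hq.1.takeUntil hzq
  have hq2 := hq.1.dropUntil hzq
  have hp1sub := p.support_takeUntil_subset hyp
  have hp2sub := p.support_dropUntil_subset hyp
  have hq1sub := q.support_takeUntil_subset hzq
  have hq2sub := q.support_dropUntil_subset hzq
  have hp2rsub : ∀ t ∈ (p.dropUntil y hyp).reverse.support, t ∈ p.support := by
    intro t ht; rw [Walk.support_reverse, List.mem_reverse] at ht; exact hp2sub ht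
  have hq1rsub : ∀ t ∈ (q.takeUntil z hzq).reverse.support, t ∈ q.support := by
    intro t ht; rw [Walk.support_reverse, List.mem_reverse] at ht; exact hq1sub ht
  rcases le_total (p.takeUntil y hyp).length (p.dropUntil y hyp).length with h12 | h12
  · rcases le_total (q.takeUntil z hzq).length (q.dropUntil z hzq).length with h34 | h34
    · exact main _ _ hp2.reverse hq2 hp2rsub (fun t ht => hq2sub ht)
        (by rw [Walk.length_reverse]; omega) (by omega)
    · exact main _ _ hp2.reverse hq1.reverse hp2rsub hq1rsub
        (by rw [Walk.length_reverse]; omega) (by rw [Walk.length_reverse]; omega)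
  · rcases le_total (q.takeUntil z hzq).length (q.dropUntil z hzq).length with h34 | h34
    · exact main _ _ hp1 hq2 (fun t ht => hp1sub ht) (fun t ht => hq2sub ht)
        (by omega) (by omega)
    · exact main _ _ hp1 hq1.reverse (fun t ht => hp1sub ht) hq1rsub
        (by omega) (by rw [Walk.length_reverse]; omega)

lemma reachIn_support {u v : V} (p : G.Walk u v) {x y : V}
    (hx : x ∈ p.support) (hy : y ∈ p.support) :
    ReachIn G {t | t ∈ p.support} x y := by
  classical
  have h1 : ReachIn G {t | t ∈ p.support} u x :=
    ⟨p.takeUntil x hx, fun z hz => p.support_takeUntil_subset hx hz⟩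
  have h2 : ReachIn G {t | t ∈ p.support} u y :=
    ⟨p.takeUntil y hy, fun z hz => p.support_takeUntil_subset hy hz⟩
  exact h1.symm.trans h2


end BlockAux

theorem exists_block_meeting_all_longest_paths {V : Type} [Fintype V]
    (G : SimpleGraph V) (hconn : G.Connected) (hcard : 2 ≤ Fintype.card V) :
    ∃ B : Set V, IsBlock G B ∧
      ∀ (u v : V) (p : G.Walk u v), IsLongestPath G p → ∃ b ∈ B, b ∈ p.support := by
  classical
  set P : Set (Set V) :=
    {S | ∃ (u v : V) (p : G.Walk u v), IsLongestPath G p ∧ S = {t | t ∈ p.support}} with hPdef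
  have hUconn : ∀ x ∈ (Set.univ : Set V), ∀ y ∈ (Set.univ : Set V),
      ReachIn G Set.univ x y := by
    intro x _ y _
    obtain ⟨w⟩ := hconn.preconnected x y
    exact ⟨w, fun z _ => trivial⟩
  have hP : ∀ S ∈ P, S.Nonempty ∧ S ⊆ Set.univ ∧ ∀ x ∈ S, ∀ y ∈ S, ReachIn G S x y := by
    rintro S ⟨u, v, p, hp, rfl⟩
    exact ⟨⟨u, p.start_mem_support⟩, Set.subset_univ _,
      fun x hx y hy => reachIn_support p hx hy⟩
  have hPint : ∀ S ∈ P, ∀ T ∈ P, (S ∩ T).Nonempty := by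
    rintro S ⟨u, v, p, hp, rfl⟩ T ⟨w, x, q, hq, rfl⟩
    obtain ⟨z, h1, h2⟩ := longest_paths_intersect hconn.preconnected hp hq
    exact ⟨z, h1, h2⟩
  have hcard' : 2 ≤ (Set.univ : Set V).ncard := by
    rw [Set.ncard_univ, Nat.card_eq_fintype_card]; exact hcard
  obtain ⟨B, _, hB2, hBnc, hBmax, hBmeets⟩ :=
    key_induction G ((Set.univ : Set V).ncard) Set.univ le_rfl hcard' hUconn P hP hPint
  refine ⟨B, ⟨hBnc.1, ?_, ?_, ?_⟩, ?_⟩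
  · exact connected_induce_iff.2 ⟨hBnc.1, hBnc.2.1⟩
  · intro c; exact preconnected_induce_iff.2 (hBnc.2.2 c)
  · intro B' hBB' hB'conn hB'pre
    exact hBmax B' hBB' (Set.subset_univ _)
      ⟨(_root_.connected_induce_iff.1 hB'conn).1, (_root_.connected_induce_iff.1 hB'conn).2,
        fun c => preconnected_induce_iff.1 (hB'pre c)⟩
  · intro u v p hp
    obtain ⟨t, htB, hts⟩ := hBmeets {t | t ∈ p.support} ⟨u, v, p, hp, rfl⟩
    exact ⟨t, htB, hts⟩
end

section
/- Let G be a finite connected simple graph and let xy be a bridge (cutedge) of G such that every longest path of G contains x or contains y. Then either x belongs to every longest path of G, or y belongs to every longest path of G. -/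
open SimpleGraph

theorem bridge_endpoint_in_all_longest_paths {V : Type} [Fintype V]
    (G : SimpleGraph V) (hconn : G.Connected) (x y : V) (hbridge : G.IsBridge s(x, y))
    (hxy : ∀ (u v : V) (p : G.Walk u v), IsLongestPath G p →
      x ∈ p.support ∨ y ∈ p.support) :
    (∀ (u v : V) (p : G.Walk u v), IsLongestPath G p → x ∈ p.support) ∨
      (∀ (u v : V) (p : G.Walk u v), IsLongestPath G p → y ∈ p.support) := by
  by_contra hcon
  push_neg at hcon
  obtain ⟨⟨u, v, p, hp, hxp⟩, w, z, q, hq, hyq⟩ := hcon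
  classical
  have hyp : y ∈ p.support := (hxy u v p hp).resolve_left hxp
  have hxq : x ∈ q.support := (hxy w z q hq).resolve_right hyq
  obtain ⟨hadj, hnr⟩ : G.Adj x y ∧ ¬ (G.deleteEdges {s(x, y)}).Reachable x y := by
    refine ⟨?_, (isBridge_iff).mp hbridge⟩
    by_contra hna
    apply (isBridge_iff).mp hbridge
    rw [deleteEdges_eq_self.mpr]
    · exact hconn.preconnected x y
    · rw [Set.disjoint_singleton_right]; exact hna
  set G' := G \ fromEdgeSet {s(x, y)} with hG'
  have hadj' : G.Adj x y := hadj
  -- walks avoiding x (or avoiding y) transfer to G'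
  have htrans : ∀ {a b : V} (r : G.Walk a b), (x ∉ r.support ∨ y ∉ r.support) →
      ∀ e ∈ r.edges, e ∈ G'.edgeSet := by
    intro a b r hr e he
    have h1 : e ∈ G.edgeSet := r.edges_subset_edgeSet he
    have h2 : e ≠ s(x, y) := by
      rintro rfl
      rcases hr with hr | hr
      · exact hr (r.fst_mem_support_of_mem_edges he)
      · exact hr (r.snd_mem_support_of_mem_edges he)
    simp only [hG', edgeSet_sdiff, edgeSet_fromEdgeSet, edgeSet_sdiff_sdiff_isDiag,
      Set.mem_diff, Set.mem_singleton_iff]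
    exact ⟨h1, h2⟩
  -- every vertex of p reaches y in G'
  have reach_y : ∀ a ∈ p.support, G'.Reachable a y := by
    intro a ha
    let p' := p.transfer G' (htrans p (Or.inl hxp))
    have hsupp : p'.support = p.support := p.support_transfer _
    have ha' : a ∈ p'.support := hsupp ▸ ha
    have hy' : y ∈ p'.support := hsupp ▸ hyp
    exact (Reachable.symm ⟨p'.takeUntil a ha'⟩).trans ⟨p'.takeUntil y hy'⟩
  have reach_x : ∀ a ∈ q.support, G'.Reachable a x := by
    intro a ha
    let q' := q.transfer G' (htrans q (Or.inr hyq))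
    have hsupp : q'.support = q.support := q.support_transfer _
    have ha' : a ∈ q'.support := hsupp ▸ ha
    have hx' : x ∈ q'.support := hsupp ▸ hxq
    exact (Reachable.symm ⟨q'.takeUntil a ha'⟩).trans ⟨q'.takeUntil x hx'⟩
  have hdisj : ∀ a, a ∈ p.support → a ∈ q.support → False := by
    intro a h1 h2
    exact hnr (((reach_x a h2).symm.trans (reach_y a h1)))
  -- joining a half of p (ending at y) with a half of q (starting at x)
  have key : ∀ {s t : V} (pend : G.Walk s y) (qst : G.Walk x t), pend.IsPath → qst.IsPath →
      (∀ a ∈ pend.support, a ∈ p.support) → (∀ a ∈ qst.support, a ∈ q.support) →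
      pend.length + qst.length + 1 ≤ p.length := by
    intro s t pend qst hpend hqst hsp hsq
    have hcons : (Walk.cons hadj'.symm qst).IsPath := by
      rw [Walk.cons_isPath_iff]
      exact ⟨hqst, fun hy => hdisj y hyp (hsq y hy)⟩
    set r := pend.append (Walk.cons hadj'.symm qst) with hrdef
    have hsuppr : r.support = pend.support ++ qst.support := by
      rw [hrdef, Walk.support_append, Walk.support_cons, List.tail_cons]
    have hnd : (pend.support ++ qst.support).Nodup :=
      List.Nodup.append hpend.support_nodup hqst.support_nodup
        (fun a ha hb => hdisj a (hsp a ha) (hsq a hb))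
    have hr : r.IsPath := Walk.IsPath.mk' (by rw [hsuppr]; exact hnd)
    have hb := hp.2 _ _ r hr
    rw [hrdef, Walk.length_append, Walk.length_cons] at hb
    omega
  -- length bookkeeping
  have hlp : (p.takeUntil y hyp).length + (p.dropUntil y hyp).length = p.length := by
    have := congrArg Walk.length (p.take_spec hyp)
    rwa [Walk.length_append] at this
  have hlq : (q.takeUntil x hxq).length + (q.dropUntil x hxq).length = q.length := by
    have := congrArg Walk.length (q.take_spec hxq)
    rwa [Walk.length_append] at this
  have hqp : q.length = p.length :=
    le_antisymm (hp.2 _ _ q hq.1) (hq.2 _ _ p hp.1)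
  have k1 : (p.takeUntil y hyp).length + (q.dropUntil x hxq).length + 1 ≤ p.length :=
    key (p.takeUntil y hyp) (q.dropUntil x hxq) (hp.1.takeUntil hyp) (hq.1.dropUntil hxq)
      (fun a ha => p.support_takeUntil_subset hyp ha)
      (fun a ha => q.support_dropUntil_subset hxq ha)
  have k2 : ((p.dropUntil y hyp).reverse).length + ((q.takeUntil x hxq).reverse).length + 1
      ≤ p.length :=
    key ((p.dropUntil y hyp).reverse) ((q.takeUntil x hxq).reverse)
      (hp.1.dropUntil hyp).reverse (hq.1.takeUntil hxq).reverse
      (fun a ha => p.support_dropUntil_subset hyp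
        (by simpa [Walk.support_reverse] using ha))
      (fun a ha => q.support_takeUntil_subset hxq
        (by simpa [Walk.support_reverse] using ha))
  rw [Walk.length_reverse, Walk.length_reverse] at k2
  omega
end

section
/- Let G be a finite connected simple graph that is (K_{1,3}, P_6)-free, let B be a 2-connected block of G, and let x and x' be vertices of B each having a neighbor in G outside V(B). Then N(x) ∩ N(x') ∩ V(B) ≠ ∅, i.e., x and x' have a common neighbor inside B. -/
open SimpleGraph

section helpers
variable {V : Type} {G : SimpleGraph V}

lemma reach_mono {S T : Set V} (hST : S ⊆ T) {u v : V} (hu : u ∈ S) (hv : v ∈ S)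
    (h : (G.induce S).Reachable ⟨u, hu⟩ ⟨v, hv⟩) :
    (G.induce T).Reachable ⟨u, hST hu⟩ ⟨v, hST hv⟩ :=
  h.map ⟨Set.inclusion hST, fun hadj => hadj⟩

lemma insert_connected {S : Set V} (hS : (G.induce S).Connected) {y s : V}
    (hs : s ∈ S) (hadj : G.Adj y s) : (G.induce (insert y S)).Connected := by
  have key : ∀ (u : V) (hu : u ∈ insert y S),
      (G.induce (insert y S)).Reachable ⟨s, Set.mem_insert_of_mem y hs⟩ ⟨u, hu⟩ := by
    intro u hu
    rcases hu with rfl | huS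
    · exact (Adj.reachable (by exact hadj.symm :
        (G.induce (insert u S)).Adj ⟨s, _⟩ ⟨u, Set.mem_insert u S⟩))
    · exact reach_mono (Set.subset_insert y S) hs huS (hS.preconnected _ _)
  constructor
  rintro ⟨u, hu⟩ ⟨v, hv⟩
  exact (key u hu).symm.trans (key v hv)

lemma dist_step {W : Type} {H : SimpleGraph W} (hc : H.Connected) {u v : W} {n : ℕ}
    (h : H.dist u v = n + 1) : ∃ w, H.Adj u w ∧ H.dist w v = n := by
  obtain ⟨p, hp⟩ := hc.exists_walk_length_eq_dist u v
  cases p with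
  | nil => simp at h
  | cons hadj q =>
    rename_i w
    refine ⟨w, hadj, le_antisymm ?_ ?_⟩
    · have := SimpleGraph.dist_le q
      simp [Walk.length_cons, h] at hp
      omega
    · have h1 : H.dist u w ≤ 1 := SimpleGraph.dist_le (Walk.cons hadj Walk.nil)
      have := hc.dist_triangle (u := u) (v := w) (w := v)
      omega

lemma dist_one_adj {W : Type} {H : SimpleGraph W} (hc : H.Connected) {u v : W}
    (h : H.dist u v = 1) : H.Adj u v := by
  obtain ⟨p, hp⟩ := hc.exists_walk_length_eq_dist u v
  cases p with
  | nil => simp at h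
  | cons hadj q =>
    have hl : q.length = 0 := by rw [Walk.length_cons, h] at hp; omega
    have := q.eq_of_length_eq_zero hl
    subst this; exact hadj

lemma dist_zero_eq {W : Type} {H : SimpleGraph W} (hc : H.Connected) {u v : W}
    (h : H.dist u v = 0) : u = v := by
  obtain ⟨p, hp⟩ := hc.exists_walk_length_eq_dist u v
  rw [h] at hp
  exact p.eq_of_length_eq_zero hp

lemma exists_nbr {S : Set V} (hS : (G.induce S).Connected) {a b : V}
    (ha : a ∈ S) (hb : b ∈ S) (hab : a ≠ b) : ∃ z ∈ S, G.Adj a z := by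
  cases hdd : (G.induce S).dist ⟨a, ha⟩ ⟨b, hb⟩ with
  | zero => exact absurd (congrArg Subtype.val (dist_zero_eq hS hdd)) hab
  | succ n =>
    obtain ⟨w, hw, -⟩ := dist_step hS hdd
    exact ⟨w.1, w.2, hw⟩

end helpers

section embeds
variable {V : Type} {G : SimpleGraph V}

set_option maxHeartbeats 1000000 in
lemma claw_embed {c a b d : V} (hca : G.Adj c a) (hcb : G.Adj c b) (hcd : G.Adj c d)
    (hab : ¬ G.Adj a b) (had : ¬ G.Adj a d) (hbd : ¬ G.Adj b d)
    (nab : a ≠ b) (nad : a ≠ d) (nbd : b ≠ d) : Nonempty (claw ↪g G) := by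
  have hba := fun h => hab (G.adj_symm h)
  have hda := fun h => had (G.adj_symm h)
  have hdb := fun h => hbd (G.adj_symm h)
  have h1 := hca.symm; have h2 := hcb.symm; have h3 := hcd.symm
  have n1 := hca.ne; have n2 := hcb.ne; have n3 := hcd.ne
  have n1' := hca.ne'; have n2' := hcb.ne'; have n3' := hcd.ne'
  have nab' := nab.symm; have nad' := nad.symm; have nbd' := nbd.symm
  refine ⟨⟨fun i => ![c, a, b, d] i, ?_⟩, ?_⟩
  · intro i j hij
    fin_cases i <;> fin_cases j <;> first | rfl | (exfalso; simp at hij; tauto)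
  · intro i j
    fin_cases i <;> fin_cases j <;>
      simp [claw, SimpleGraph.fromRel_adj] <;> tauto

set_option maxHeartbeats 2000000 in
lemma path6_embed {v0 v1 v2 v3 v4 v5 : V}
    (e01 : G.Adj v0 v1) (e12 : G.Adj v1 v2) (e23 : G.Adj v2 v3) (e34 : G.Adj v3 v4)
    (e45 : G.Adj v4 v5)
    (n02 : ¬ G.Adj v0 v2) (n03 : ¬ G.Adj v0 v3) (n04 : ¬ G.Adj v0 v4) (n05 : ¬ G.Adj v0 v5)
    (n13 : ¬ G.Adj v1 v3) (n14 : ¬ G.Adj v1 v4) (n15 : ¬ G.Adj v1 v5)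
    (n24 : ¬ G.Adj v2 v4) (n25 : ¬ G.Adj v2 v5) (n35 : ¬ G.Adj v3 v5)
    (d02 : v0 ≠ v2) (d03 : v0 ≠ v3) (d04 : v0 ≠ v4) (d05 : v0 ≠ v5)
    (d13 : v1 ≠ v3) (d14 : v1 ≠ v4) (d15 : v1 ≠ v5)
    (d24 : v2 ≠ v4) (d25 : v2 ≠ v5) (d35 : v3 ≠ v5) : Nonempty (pathGraph 6 ↪g G) := by
  have m02 := fun h => n02 (G.adj_symm h)
  have m03 := fun h => n03 (G.adj_symm h)
  have m04 := fun h => n04 (G.adj_symm h)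
  have m05 := fun h => n05 (G.adj_symm h)
  have m13 := fun h => n13 (G.adj_symm h)
  have m14 := fun h => n14 (G.adj_symm h)
  have m15 := fun h => n15 (G.adj_symm h)
  have m24 := fun h => n24 (G.adj_symm h)
  have m25 := fun h => n25 (G.adj_symm h)
  have m35 := fun h => n35 (G.adj_symm h)
  have f01 := e01.symm; have f12 := e12.symm; have f23 := e23.symm
  have f34 := e34.symm; have f45 := e45.symm
  have g01 := e01.ne; have g12 := e12.ne; have g23 := e23.ne
  have g34 := e34.ne; have g45 := e45.ne
  have g01' := e01.ne'; have g12' := e12.ne'; have g23' := e23.ne'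
  have g34' := e34.ne'; have g45' := e45.ne'
  have d02' := d02.symm; have d03' := d03.symm; have d04' := d04.symm
  have d05' := d05.symm; have d13' := d13.symm; have d14' := d14.symm
  have d15' := d15.symm; have d24' := d24.symm; have d25' := d25.symm
  have d35' := d35.symm
  refine ⟨⟨fun i => ![v0, v1, v2, v3, v4, v5] i, ?_⟩, ?_⟩
  · intro i j hij
    fin_cases i <;> fin_cases j <;> first | rfl | (exfalso; simp at hij; tauto)
  · intro i j
    fin_cases i <;> fin_cases j <;> simp [pathGraph_adj] <;> tauto

end embeds

theorem common_neighbor_in_block_P6 {V : Type} [Fintype V] (G : SimpleGraph V)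
    (hconn : G.Connected) (hclaw : IndFree G claw) (hP6 : IndFree G (pathGraph 6))
    (B : Set V) (hB : IsBlock G B) (h2c : TwoConnectedOn G B)
    (x x' : V) (hx : x ∈ B) (hx' : x' ∈ B)
    (hy : ∃ y, y ∉ B ∧ G.Adj x y) (hy' : ∃ y, y ∉ B ∧ G.Adj x' y) :
    (G.neighborSet x ∩ G.neighborSet x' ∩ B).Nonempty := by
  classical
  obtain ⟨y, hyB, hxy⟩ := hy
  obtain ⟨y', hy'B, hx'y'⟩ := hy'
  obtain ⟨hBne, hBconn, hBpre, hBmax⟩ := hB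
  obtain ⟨hcard, hdel⟩ := h2c
  -- Lemma A : a vertex outside B has at most one neighbour in B
  have lemA : ∀ z a b : V, z ∉ B → a ∈ B → b ∈ B → a ≠ b → G.Adj z a → G.Adj z b → False := by
    intro z a b hzB haB hbB hab hza hzb
    have hconn' : (G.induce (insert z B)).Connected := insert_connected hBconn haB hza
    have hpre' : ∀ v : V, (G.induce ((insert z B) \ {v})).Preconnected := by
      intro v
      by_cases hvz : v = z
      · subst hvz
        have hset : (insert v B) \ {v} = B := by
          ext t
          simp only [Set.mem_diff, Set.mem_insert_iff, Set.mem_singleton_iff]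
          constructor
          · rintro ⟨rfl | htB, htv⟩
            · exact absurd rfl htv
            · exact htB
          · intro htB
            exact ⟨Or.inr htB, fun h => hzB (h ▸ htB)⟩
        rw [hset]; exact hBconn.preconnected
      · have hset : (insert z B) \ {v} = insert z (B \ {v}) := by
          ext t
          simp only [Set.mem_diff, Set.mem_insert_iff, Set.mem_singleton_iff]
          constructor
          · rintro ⟨rfl | htB, htv⟩
            · exact Or.inl rfl
            · exact Or.inr ⟨htB, htv⟩
          · rintro (rfl | ⟨htB, htv⟩)
            · exact ⟨Or.inl rfl, fun h => hvz h.symm⟩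
            · exact ⟨Or.inr htB, htv⟩
        rw [hset]
        by_cases hva : v = a
        · subst hva
          exact (insert_connected (hdel v) ⟨hbB, fun h => hab (h.symm ▸ rfl)⟩ hzb).preconnected
        · exact (insert_connected (hdel v) ⟨haB, fun h => hva (h.symm ▸ rfl)⟩ hza).preconnected
    have := hBmax (insert z B) (Set.subset_insert z B) hconn' hpre'
    exact hzB (this ▸ Set.mem_insert z B)
  -- Lemma B : no edge between two distinct outside vertices attached to distinct B-vertices
  have lemB : ∀ z z' a a' : V, z ∉ B → z' ∉ B → a ∈ B → a' ∈ B → a ≠ a' → z ≠ z' →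
      G.Adj z a → G.Adj z' a' → G.Adj z z' → False := by
    intro z z' a a' hzB hz'B haB ha'B haa' hzz' hza hz'a' hadjzz'
    have hc1 : (G.induce (insert z' B)).Connected := insert_connected hBconn ha'B hz'a'
    have hconn' : (G.induce (insert z (insert z' B))).Connected :=
      insert_connected hc1 (Set.mem_insert_of_mem z' haB) hza
    have hpre' : ∀ v : V, (G.induce ((insert z (insert z' B)) \ {v})).Preconnected := by
      intro v
      by_cases hvz : v = z
      · subst hvz
        have hset : (insert v (insert z' B)) \ {v} = insert z' B := by
          ext t
          simp only [Set.mem_diff, Set.mem_insert_iff, Set.mem_singleton_iff]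
          constructor
          · rintro ⟨rfl | ht, htv⟩
            · exact absurd rfl htv
            · exact ht
          · rintro (rfl | htB)
            · exact ⟨Or.inr (Or.inl rfl), fun h => hzz' h.symm⟩
            · exact ⟨Or.inr (Or.inr htB), fun h => hzB (h ▸ htB)⟩
        rw [hset]; exact hc1.preconnected
      · by_cases hvz' : v = z'
        · subst hvz'
          have hset : (insert z (insert v B)) \ {v} = insert z B := by
            ext t
            simp only [Set.mem_diff, Set.mem_insert_iff, Set.mem_singleton_iff]
            constructor
            · rintro ⟨rfl | rfl | htB, htv⟩
              · exact Or.inl rfl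
              · exact absurd rfl htv
              · exact Or.inr htB
            · rintro (rfl | htB)
              · exact ⟨Or.inl rfl, fun h => hzz' h⟩
              · exact ⟨Or.inr (Or.inr htB), fun h => hz'B (h ▸ htB)⟩
          rw [hset]
          exact (insert_connected hBconn haB hza).preconnected
        · have hset : (insert z (insert z' B)) \ {v} = insert z (insert z' (B \ {v})) := by
            ext t
            simp only [Set.mem_diff, Set.mem_insert_iff, Set.mem_singleton_iff]
            constructor
            · rintro ⟨rfl | rfl | htB, htv⟩
              · exact Or.inl rfl
              · exact Or.inr (Or.inl rfl)
              · exact Or.inr (Or.inr ⟨htB, htv⟩)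
            · rintro (rfl | rfl | ⟨htB, htv⟩)
              · exact ⟨Or.inl rfl, fun h => hvz h.symm⟩
              · exact ⟨Or.inr (Or.inl rfl), fun h => hvz' h.symm⟩
              · exact ⟨Or.inr (Or.inr htB), htv⟩
          rw [hset]
          by_cases hva' : v = a'
          · subst hva'
            rw [Set.insert_comm]
            have hc2 : (G.induce (insert z (B \ {v}))).Connected :=
              insert_connected (hdel v) ⟨haB, fun h => haa' (h.symm ▸ rfl)⟩ hza
            exact (insert_connected hc2 (Set.mem_insert z _) hadjzz'.symm).preconnected
          · have hc2 : (G.induce (insert z' (B \ {v}))).Connected :=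
              insert_connected (hdel v) ⟨ha'B, fun h => hva' (h.symm ▸ rfl)⟩ hz'a'
            exact (insert_connected hc2 (Set.mem_insert z' _) hadjzz').preconnected
    have := hBmax (insert z (insert z' B)) (fun t ht =>
      Set.mem_insert_of_mem z (Set.mem_insert_of_mem z' ht)) hconn' hpre'
    exact hzB (this ▸ Set.mem_insert z _)
  -- suppose no common neighbour
  by_contra hne
  have hcommon : ∀ z : V, z ∈ B → G.Adj x z → G.Adj x' z → False := by
    intro z hzB h1 h2
    exact hne ⟨z, ⟨⟨h1, h2⟩, hzB⟩⟩
  -- x ≠ x'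
  have hxxne : x ≠ x' := by
    rintro rfl
    have hlt1 : 1 < B.ncard := by omega
    obtain ⟨b, hbB, hbx⟩ := Set.exists_ne_of_one_lt_ncard hlt1 x
    obtain ⟨z, hzB, hz⟩ := exists_nbr hBconn hx hbB (fun h => hbx h.symm)
    exact hcommon z hzB hz hz
  -- x not adjacent to x'
  have hxx' : ¬ G.Adj x x' := by
    intro hadjxx
    have hfin : B.Finite := Set.toFinite B
    have hncard : (B \ {x'}).ncard = B.ncard - 1 := Set.ncard_diff_singleton_of_mem hx'
    have hlt : 1 < (B \ {x'}).ncard := by omega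
    obtain ⟨b, hbB, hbx⟩ := Set.exists_ne_of_one_lt_ncard hlt x
    obtain ⟨z, hzB, hz⟩ := exists_nbr (hdel x') ⟨hx, hxxne⟩ hbB (fun h => hbx h.symm)
    obtain ⟨hzB', hzx'⟩ := hzB
    by_cases hzadj : G.Adj x' z
    · exact hcommon z hzB' hz hzadj
    · refine hclaw (claw_embed (c := x) (a := y) (b := z) (d := x') hxy hz hadjxx
        ?_ ?_ ?_ ?_ ?_ ?_)
      · exact fun h => lemA y x z hyB hx hzB' hz.ne hxy.symm h
      · exact fun h => lemA y x x' hyB hx hx' hxxne hxy.symm h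
      · exact fun h => hzadj h.symm
      · exact fun h => hyB (h ▸ hzB')
      · exact fun h => hyB (h ▸ hx')
      · exact hzx'
  -- set up distances in the induced graph on B
  set H : SimpleGraph ↥B := G.induce B with hH
  have hHconn : H.Connected := hBconn
  set xB : ↥B := ⟨x, hx⟩
  set x'B : ↥B := ⟨x', hx'⟩
  have toG : ∀ {u w : ↥B}, H.Adj u w → G.Adj u.1 w.1 := fun h => h
  have toH : ∀ {u w : ↥B}, G.Adj u.1 w.1 → H.Adj u w := fun h => h
  have adj_dist : ∀ u w : ↥B, H.Adj u w → H.dist u x'B ≤ 1 + H.dist w x'B := by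
    intro u w h
    have h1 : H.dist u w ≤ 1 := SimpleGraph.dist_le (Walk.cons h Walk.nil)
    have := hHconn.dist_triangle (u := u) (v := w) (w := x'B)
    omega
  have hneq : ∀ u w : ↥B, H.dist u x'B ≠ H.dist w x'B → u.1 ≠ w.1 := by
    intro u w hd h
    exact hd (congrArg (fun t => H.dist t x'B) (Subtype.coe_injective h))
  have hd0 : H.dist xB x'B ≠ 0 := by
    intro h
    exact hxxne (congrArg Subtype.val (dist_zero_eq hHconn h))
  have hd1 : H.dist xB x'B ≠ 1 := fun h => hxx' (toG (dist_one_adj hHconn h))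
  have hd2 : H.dist xB x'B ≠ 2 := by
    intro h
    obtain ⟨c1, a1, h1⟩ := dist_step hHconn (show H.dist xB x'B = 1 + 1 by omega)
    have := dist_one_adj hHconn h1
    exact hcommon c1.1 c1.2 (toG a1) (toG this.symm)
  obtain ⟨n, hn⟩ : ∃ n, H.dist xB x'B = n + 3 := by
    have : 3 ≤ H.dist xB x'B := by omega
    exact ⟨H.dist xB x'B - 3, by omega⟩
  obtain ⟨c1, a1, h1⟩ := dist_step hHconn (by omega : H.dist xB x'B = (n + 2) + 1)
  obtain ⟨c2, a2, h2⟩ := dist_step hHconn (by omega : H.dist c1 x'B = (n + 1) + 1)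
  obtain ⟨c3, a3, h3⟩ := dist_step hHconn (by omega : H.dist c2 x'B = n + 1)
  have hdx : H.dist xB x'B = n + 3 := hn
  have hyy' : y ≠ y' := by
    rintro rfl
    exact lemA y x x' hyB hx hx' hxxne hxy.symm hx'y'.symm
  -- non-adjacency facts from distances
  have nxc2 : ¬ G.Adj x c2.1 := by
    intro h
    have := adj_dist xB c2 (toH h)
    omega
  have nxc3 : ¬ G.Adj x c3.1 := by
    intro h
    have := adj_dist xB c3 (toH h)
    omega
  have nc1c3 : ¬ G.Adj c1.1 c3.1 := by
    intro h
    have := adj_dist c1 c3 (toH h)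
    omega
  cases n with
  | zero =>
    -- c3 = x'
    have hc3 : c3 = x'B := dist_zero_eq hHconn h3
    have e34 : G.Adj c2.1 x' := by rw [hc3] at a3; exact toG a3
    have hc1dist : H.dist c1 x'B = 2 := h1
    have hc2dist : H.dist c2 x'B = 1 := h2
    have hdistx' : H.dist x'B x'B = 0 := SimpleGraph.dist_self
    refine hP6 (path6_embed (v0 := y) (v1 := x) (v2 := c1.1) (v3 := c2.1) (v4 := x') (v5 := y')
      hxy.symm (toG a1) (toG a2) e34 hx'y'
      ?_ ?_ ?_ ?_ ?_ ?_ ?_ ?_ ?_ ?_ ?_ ?_ ?_ ?_ ?_ ?_ ?_ ?_ ?_ ?_)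
    · exact fun h => lemA y x c1.1 hyB hx c1.2 (toG a1).ne hxy.symm h
    · exact fun h => lemA y x c2.1 hyB hx c2.2 (hneq xB c2 (by omega)) hxy.symm h
    · exact fun h => lemA y x x' hyB hx hx' hxxne hxy.symm h
    · exact fun h => lemB y y' x x' hyB hy'B hx hx' hxxne hyy' hxy.symm hx'y'.symm h
    · exact nxc2
    · exact hxx'
    · exact fun h => lemA y' x' x hy'B hx' hx (Ne.symm hxxne) hx'y'.symm h.symm
    · intro h
      have := adj_dist c1 x'B (toH h)
      omega
    · exact fun h => lemA y' x' c1.1 hy'B hx' c1.2 (hneq x'B c1 (by omega)) hx'y'.symm h.symm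
    · exact fun h => lemA y' x' c2.1 hy'B hx' c2.2 (hneq x'B c2 (by omega)) hx'y'.symm h.symm
    · exact fun h => hyB (h ▸ c1.2)
    · exact fun h => hyB (h ▸ c2.2)
    · exact fun h => hyB (h ▸ hx')
    · exact hyy'
    · exact hneq xB c2 (by omega)
    · exact hxxne
    · exact fun h => hy'B (h ▸ hx)
    · exact hneq c1 x'B (by omega)
    · exact fun h => hy'B (h ▸ c1.2)
    · exact fun h => hy'B (h ▸ c2.2)
  | succ m =>
    obtain ⟨c4, a4, h4⟩ := dist_step hHconn h3
    refine hP6 (path6_embed (v0 := y) (v1 := x) (v2 := c1.1) (v3 := c2.1) (v4 := c3.1) (v5 := c4.1)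
      hxy.symm (toG a1) (toG a2) (toG a3) (toG a4)
      ?_ ?_ ?_ ?_ ?_ ?_ ?_ ?_ ?_ ?_ ?_ ?_ ?_ ?_ ?_ ?_ ?_ ?_ ?_ ?_)
    · exact fun h => lemA y x c1.1 hyB hx c1.2 (toG a1).ne hxy.symm h
    · exact fun h => lemA y x c2.1 hyB hx c2.2 (hneq xB c2 (by omega)) hxy.symm h
    · exact fun h => lemA y x c3.1 hyB hx c3.2 (hneq xB c3 (by omega)) hxy.symm h
    · exact fun h => lemA y x c4.1 hyB hx c4.2 (hneq xB c4 (by omega)) hxy.symm h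
    · exact nxc2
    · exact nxc3
    · intro h
      have := adj_dist xB c4 (toH h)
      omega
    · exact nc1c3
    · intro h
      have := adj_dist c1 c4 (toH h)
      omega
    · intro h
      have := adj_dist c2 c4 (toH h)
      omega
    · exact fun h => hyB (h ▸ c1.2)
    · exact fun h => hyB (h ▸ c2.2)
    · exact fun h => hyB (h ▸ c3.2)
    · exact fun h => hyB (h ▸ c4.2)
    · exact hneq xB c2 (by omega)
    · exact hneq xB c3 (by omega)
    · exact hneq xB c4 (by omega)
    · exact hneq c1 c3 (by omega)
    · exact hneq c1 c4 (by omega)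
    · exact hneq c2 c4 (by omega)
end

section
/- Let G be a finite connected simple graph that is (K_{1,3}, Z_3)-free, let B be a 2-connected block of G, and let x and x' be vertices of B such that for each of x and x' there exist two distinct vertices y, v of G outside V(B) with x (respectively x') adjacent to y, and with v adjacent to x (respectively x') or adjacent to y. Then N(x) ∩ N(x') ∩ V(B) ≠ ∅, i.e., x and x' have a common neighbor inside B. -/
open SimpleGraph

section Helpers


variable {V : Type} {G : SimpleGraph V}


private lemma vec4_eval {α : Type*} (a0 a1 a2 a3 : α) :
    (![a0,a1,a2,a3]) 0 = a0 ∧ (![a0,a1,a2,a3]) 1 = a1 ∧ (![a0,a1,a2,a3]) 2 = a2 ∧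
    (![a0,a1,a2,a3]) 3 = a3 := ⟨rfl, rfl, rfl, rfl⟩

private lemma vec6_eval {α : Type*} (a0 a1 a2 a3 a4 a5 : α) :
    (![a0,a1,a2,a3,a4,a5]) 0 = a0 ∧ (![a0,a1,a2,a3,a4,a5]) 1 = a1 ∧
    (![a0,a1,a2,a3,a4,a5]) 2 = a2 ∧ (![a0,a1,a2,a3,a4,a5]) 3 = a3 ∧
    (![a0,a1,a2,a3,a4,a5]) 4 = a4 ∧ (![a0,a1,a2,a3,a4,a5]) 5 = a5 :=
  ⟨rfl, rfl, rfl, rfl, rfl, rfl⟩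

lemma claw_false (hclaw : IndFree G claw) {c l1 l2 l3 : V}
    (h1 : G.Adj c l1) (h2 : G.Adj c l2) (h3 : G.Adj c l3)
    (n12 : ¬ G.Adj l1 l2) (n13 : ¬ G.Adj l1 l3) (n23 : ¬ G.Adj l2 l3)
    (d12 : l1 ≠ l2) (d13 : l1 ≠ l3) (d23 : l2 ≠ l3) : False := by
  apply hclaw
  refine ⟨⟨⟨![c, l1, l2, l3], ?_⟩, ?_⟩⟩
  · have d01 : c ≠ l1 := h1.ne
    have d02 : c ≠ l2 := h2.ne
    have d03 : c ≠ l3 := h3.ne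
    intro a b hab
    fin_cases a <;> fin_cases b <;> first
      | rfl
      | (exfalso; simp only [Matrix.cons_val_zero, Matrix.cons_val_one, Matrix.head_cons,
          Matrix.cons_val_succ] at hab
         first
          | exact d01 hab | exact d01 hab.symm | exact d02 hab | exact d02 hab.symm
          | exact d03 hab | exact d03 hab.symm | exact d12 hab | exact d12 hab.symm
          | exact d13 hab | exact d13 hab.symm | exact d23 hab | exact d23 hab.symm)
  · have m12 : ¬ G.Adj l2 l1 := fun h => n12 h.symm
    have m13 : ¬ G.Adj l3 l1 := fun h => n13 h.symm
    have m23 : ¬ G.Adj l3 l2 := fun h => n23 h.symm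
    intro a b
    fin_cases a <;> fin_cases b <;>
      simp [vec4_eval c l1 l2 l3, claw, SimpleGraph.fromRel_adj, h1, h2, h3, h1.symm, h2.symm, h3.symm,
        n12, n13, n23, m12, m13, m23, G.irrefl]
    all_goals first
      | exact h1 | exact h2 | exact h3 | exact h1.symm | exact h2.symm | exact h3.symm
      | exact n12 | exact n13 | exact n23 | exact m12 | exact m13 | exact m23

lemma Z3_false (hZ3 : IndFree G Zgraph3) {a0 a1 a2 a3 a4 a5 : V}
    (e01 : G.Adj a0 a1) (e02 : G.Adj a0 a2) (e12 : G.Adj a1 a2)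
    (e23 : G.Adj a2 a3) (e34 : G.Adj a3 a4) (e45 : G.Adj a4 a5)
    (n03 : ¬ G.Adj a0 a3) (n04 : ¬ G.Adj a0 a4) (n05 : ¬ G.Adj a0 a5)
    (n13 : ¬ G.Adj a1 a3) (n14 : ¬ G.Adj a1 a4) (n15 : ¬ G.Adj a1 a5)
    (n24 : ¬ G.Adj a2 a4) (n25 : ¬ G.Adj a2 a5) (n35 : ¬ G.Adj a3 a5) : False := by
  have d03 : a0 ≠ a3 := fun h => n04 (h ▸ e34)
  have d04 : a0 ≠ a4 := fun h => n05 (h ▸ e45)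
  have d05 : a0 ≠ a5 := fun h => n04 (h ▸ e45.symm)
  have d13 : a1 ≠ a3 := fun h => n14 (h ▸ e34)
  have d14 : a1 ≠ a4 := fun h => n15 (h ▸ e45)
  have d15 : a1 ≠ a5 := fun h => n14 (h ▸ e45.symm)
  have d24 : a2 ≠ a4 := fun h => n25 (h ▸ e45)
  have d25 : a2 ≠ a5 := fun h => n24 (h ▸ e45.symm)
  have d35 : a3 ≠ a5 := fun h => n25 (h ▸ e23)
  apply hZ3
  refine ⟨⟨⟨![a0, a1, a2, a3, a4, a5], ?_⟩, ?_⟩⟩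
  · have d01 : a0 ≠ a1 := e01.ne
    have d02 : a0 ≠ a2 := e02.ne
    have d12 : a1 ≠ a2 := e12.ne
    have d23 : a2 ≠ a3 := e23.ne
    have d34 : a3 ≠ a4 := e34.ne
    have d45 : a4 ≠ a5 := e45.ne
    intro a b hab
    fin_cases a <;> fin_cases b <;> first
      | rfl
      | (exfalso; simp only [Matrix.cons_val_zero, Matrix.cons_val_one, Matrix.head_cons,
          Matrix.cons_val_succ] at hab
         first
          | exact d01 hab | exact d01 hab.symm | exact d02 hab | exact d02 hab.symm
          | exact d03 hab | exact d03 hab.symm | exact d04 hab | exact d04 hab.symm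
          | exact d05 hab | exact d05 hab.symm | exact d12 hab | exact d12 hab.symm
          | exact d13 hab | exact d13 hab.symm | exact d14 hab | exact d14 hab.symm
          | exact d15 hab | exact d15 hab.symm | exact d23 hab | exact d23 hab.symm
          | exact d24 hab | exact d24 hab.symm | exact d25 hab | exact d25 hab.symm
          | exact d34 hab | exact d34 hab.symm | exact d35 hab | exact d35 hab.symm
          | exact d45 hab | exact d45 hab.symm)
  · have m03 : ¬ G.Adj a3 a0 := fun h => n03 h.symm
    have m04 : ¬ G.Adj a4 a0 := fun h => n04 h.symm
    have m05 : ¬ G.Adj a5 a0 := fun h => n05 h.symm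
    have m13 : ¬ G.Adj a3 a1 := fun h => n13 h.symm
    have m14 : ¬ G.Adj a4 a1 := fun h => n14 h.symm
    have m15 : ¬ G.Adj a5 a1 := fun h => n15 h.symm
    have m24 : ¬ G.Adj a4 a2 := fun h => n24 h.symm
    have m25 : ¬ G.Adj a5 a2 := fun h => n25 h.symm
    have m35 : ¬ G.Adj a5 a3 := fun h => n35 h.symm
    intro a b
    fin_cases a <;> fin_cases b <;>
      simp [vec6_eval a0 a1 a2 a3 a4 a5, Zgraph3, SimpleGraph.fromRel_adj, e01, e02, e12, e23, e34, e45,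
        e01.symm, e02.symm, e12.symm, e23.symm, e34.symm, e45.symm, G.irrefl,
        n03, n04, n05, n13, n14, n15, n24, n25, n35, m03, m04, m05, m13, m14, m15, m24, m25, m35]
    all_goals first
      | exact e01 | exact e02 | exact e12 | exact e23 | exact e34 | exact e45
      | exact e01.symm | exact e02.symm | exact e12.symm | exact e23.symm | exact e34.symm
      | exact e45.symm
      | exact n03 | exact n04 | exact n05 | exact n13 | exact n14 | exact n15
      | exact n24 | exact n25 | exact n35
      | exact m03 | exact m04 | exact m05 | exact m13 | exact m14 | exact m15
      | exact m24 | exact m25 | exact m35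

end Helpers

section Part2

variable {V : Type} {G : SimpleGraph V} {B : Set V}

lemma myInduceAdj {s : Set V} {a b : ↥s} : (G.induce s).Adj a b ↔ G.Adj ↑a ↑b := by
  simp

lemma reachMono {s t : Set V} (hst : s ⊆ t) {a b : V} (ha : a ∈ s) (hb : b ∈ s)
    (h : (G.induce s).Reachable ⟨a, ha⟩ ⟨b, hb⟩) (ha' : a ∈ t) (hb' : b ∈ t) :
    (G.induce t).Reachable ⟨a, ha'⟩ ⟨b, hb'⟩ :=
  h.map (G.induceHomOfLE hst).toHom

/-- A vertex outside a block has at most one neighbor in the block. -/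
lemma unique_B_nbr (hB : IsBlock G B) {z : V} (hz : z ∉ B) {b1 b2 : V}
    (hb1 : b1 ∈ B) (hb2 : b2 ∈ B) (h1 : G.Adj z b1) (h2 : G.Adj z b2) : b1 = b2 := by
  by_contra hne
  obtain ⟨-, hBconn, hBdel, hBmax⟩ := hB
  have hsub : B ⊆ insert z B := Set.subset_insert _ _
  -- reachability to b1 within `insert z B` minus possibly a deleted vertex
  have key : insert z B = B := by
    apply hBmax
    · exact hsub
    · haveI : Nonempty ↥(insert z B) := ⟨⟨b1, hsub hb1⟩⟩
      constructor
      intro a b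
      · have hr : ∀ c : ↥(insert z B), (G.induce (insert z B)).Reachable c ⟨b1, hsub hb1⟩ := by
          rintro ⟨c, hc⟩
          rcases Set.mem_insert_iff.mp hc with hcz | hcB
          · have hadjc : G.Adj c b1 := hcz ▸ h1
            exact (myInduceAdj.mpr hadjc).reachable
          · exact reachMono hsub hcB hb1 (hBconn.preconnected ⟨c, hcB⟩ ⟨b1, hb1⟩) _ _
        exact (hr a).trans (hr b).symm
    · intro u
      by_cases hu : u = z
      · subst hu
        rw [Set.insert_diff_self_of_notMem hz]
        exact hBconn.preconnected
      · rw [Set.insert_diff_of_notMem _ (by simp [Ne.symm hu] : z ∉ ({u} : Set V))]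
        obtain ⟨b, hbB, hbadj, hbu⟩ : ∃ b, b ∈ B ∧ G.Adj z b ∧ b ≠ u := by
          by_cases h : b1 = u
          · exact ⟨b2, hb2, h2, fun hh => hne (h.trans hh.symm)⟩
          · exact ⟨b1, hb1, h1, h⟩
        have hbmem : b ∈ B \ {u} := ⟨hbB, hbu⟩
        have hsub2 : B \ {u} ⊆ insert z (B \ {u}) := Set.subset_insert _ _
        have hr : ∀ c : ↥(insert z (B \ {u})),
            (G.induce (insert z (B \ {u}))).Reachable c ⟨b, hsub2 hbmem⟩ := by
          rintro ⟨c, hc⟩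
          rcases Set.mem_insert_iff.mp hc with hcz | hcB
          · have hadjc : G.Adj c b := hcz ▸ hbadj
            exact (myInduceAdj.mpr hadjc).reachable
          · exact reachMono hsub2 hcB hbmem (hBdel u ⟨c, hcB⟩ ⟨b, hbmem⟩) _ _
        intro a b'
        exact (hr a).trans (hr b').symm
  exact hz (key ▸ Set.mem_insert z B)

lemma exists_adj_in {s : Set V} (hc : (G.induce s).Preconnected) {a b : V}
    (ha : a ∈ s) (hb : b ∈ s) (hab : a ≠ b) : ∃ w ∈ s, G.Adj a w := by
  obtain ⟨p⟩ := hc ⟨a, ha⟩ ⟨b, hb⟩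
  cases p with
  | nil => exact absurd rfl hab
  | @cons _ c _ h q => exact ⟨c.1, c.2, myInduceAdj.mp h⟩

lemma two_nbrs [Fintype V] (h2c : TwoConnectedOn G B) {a : V} (ha : a ∈ B) :
    ∃ w1 w2, w1 ∈ B ∧ w2 ∈ B ∧ w1 ≠ w2 ∧ G.Adj a w1 ∧ G.Adj a w2 := by
  obtain ⟨h3, hdel⟩ := h2c
  have hB1 : 1 < B.ncard := by omega
  obtain ⟨z, hz, hza⟩ := Set.exists_ne_of_one_lt_ncard hB1 a
  have hcard : ∀ u : V, 1 < (B \ {u}).ncard := by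
    intro u
    by_cases hu : u ∈ B
    · rw [Set.ncard_diff_singleton_of_mem hu]; omega
    · rw [Set.diff_singleton_eq_self hu]; omega
  -- first neighbor
  have haz : a ∈ B \ {z} := ⟨ha, fun h => hza (by simpa using h.symm)⟩
  obtain ⟨b, hbmem, hbne⟩ := Set.exists_ne_of_one_lt_ncard (hcard z) a
  obtain ⟨w1, hw1mem, hw1adj⟩ := exists_adj_in (hdel z).preconnected haz hbmem (fun h => hbne h.symm)
  -- second neighbor
  have haw1 : a ∈ B \ {w1} := ⟨ha, by simpa using hw1adj.ne⟩
  obtain ⟨b', hb'mem, hb'ne⟩ := Set.exists_ne_of_one_lt_ncard (hcard w1) a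
  obtain ⟨w2, hw2mem, hw2adj⟩ :=
    exists_adj_in (hdel w1).preconnected haw1 hb'mem (fun h => hb'ne h.symm)
  exact ⟨w1, w2, hw1mem.1, hw2mem.1, fun h => hw2mem.2 (by simp [← h]), hw1adj, hw2adj⟩

/-- The neighbors of `x` inside the block form a clique, given a pendant neighbor outside. -/
lemma clique_nbrs (hclaw : IndFree G claw) (hB : IsBlock G B) {a y : V}
    (ha : a ∈ B) (hy : y ∉ B) (hay : G.Adj a y) {w1 w2 : V}
    (hw1 : w1 ∈ B) (hw2 : w2 ∈ B) (h1 : G.Adj a w1) (h2 : G.Adj a w2)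
    (hne : w1 ≠ w2) : G.Adj w1 w2 := by
  by_contra hn
  have hyw1 : ¬ G.Adj w1 y := fun h =>
    h1.ne' (unique_B_nbr hB hy hw1 ha h.symm hay.symm)
  have hyw2 : ¬ G.Adj w2 y := fun h =>
    h2.ne' (unique_B_nbr hB hy hw2 ha h.symm hay.symm)
  exact claw_false hclaw h1 h2 hay hn hyw1 hyw2 hne
    (fun h => hy (h ▸ hw1)) (fun h => hy (h ▸ hw2))

/-- Normalized pendant structure: a path `a - y - v` leaving the block. -/
lemma pendant [Fintype V] (hclaw : IndFree G claw) (hB : IsBlock G B)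
    (h2c : TwoConnectedOn G B) {a : V} (ha : a ∈ B)
    (hc : ∃ y v : V, y ≠ v ∧ y ∉ B ∧ v ∉ B ∧ G.Adj a y ∧ (G.Adj a v ∨ G.Adj y v)) :
    ∃ y v : V, y ∉ B ∧ v ∉ B ∧ y ≠ v ∧ G.Adj a y ∧ G.Adj y v := by
  obtain ⟨y, v, hyv, hyB, hvB, hay, hav⟩ := hc
  by_cases hadj : G.Adj y v
  · exact ⟨y, v, hyB, hvB, hyv, hay, hadj⟩
  · rcases hav with hav | hav
    · -- claw at a with leaves y, v, w
      obtain ⟨w, -, hwB, -, -, haw, -⟩ := two_nbrs h2c ha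
      have hyw : ¬ G.Adj y w := fun h =>
        haw.ne' (unique_B_nbr hB hyB hwB ha h hay.symm)
      have hvw : ¬ G.Adj v w := fun h =>
        haw.ne' (unique_B_nbr hB hvB hwB ha h hav.symm)
      exact absurd (claw_false hclaw hay hav haw hadj hyw hvw hyv
        (fun h => hyB (h ▸ hwB)) (fun h => hvB (h ▸ hwB))) (fun h => h)
    · exact absurd hav hadj

end Part2

section Part3

variable {V : Type} {G : SimpleGraph V} {B : Set V}

lemma dist_getVert_left {W : Type} {H : SimpleGraph W} (hc : H.Connected) {u v : W}
    (p : H.Walk u v) (i : ℕ) : H.dist u (p.getVert i) ≤ i := by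
  induction p generalizing i with
  | nil =>
    rw [SimpleGraph.Walk.getVert_of_length_le _ (by simp)]
    simp [SimpleGraph.dist_self]
  | @cons a b c h q ih =>
    cases i with
    | zero => simp [SimpleGraph.dist_self]
    | succ n =>
      rw [SimpleGraph.Walk.getVert_cons_succ]
      have h1 : H.dist a b ≤ 1 := by
        simpa using SimpleGraph.dist_le (SimpleGraph.Walk.cons h SimpleGraph.Walk.nil)
      calc H.dist a (q.getVert n) ≤ H.dist a b + H.dist b (q.getVert n) := hc.dist_triangle
        _ ≤ 1 + n := Nat.add_le_add h1 (ih n)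
        _ = n + 1 := Nat.add_comm _ _

lemma dist_getVert_right {W : Type} {H : SimpleGraph W} {u v : W}
    (p : H.Walk u v) (i : ℕ) : H.dist (p.getVert i) v ≤ p.length - i := by
  induction p generalizing i with
  | nil =>
    rw [SimpleGraph.Walk.getVert_of_length_le _ (by simp)]
    simp [SimpleGraph.dist_self]
  | @cons a b c h q ih =>
    cases i with
    | zero =>
      simpa using SimpleGraph.dist_le (SimpleGraph.Walk.cons h q)
    | succ n =>
      rw [SimpleGraph.Walk.getVert_cons_succ]
      simpa [SimpleGraph.Walk.length_cons, Nat.succ_sub_succ] using ih n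

/-- The key step: every neighbor of `x` in `B` (other than along the path) is adjacent
to the second vertex of the geodesic. -/
lemma step2 (hZ3 : IndFree G Zgraph3) {x x' y y' w : V} {P : ℕ → V} {k : ℕ}
    (hk : 3 ≤ k)
    (hyB : y ∉ B) (hy'B : y' ∉ B)
    (hxy : G.Adj x y) (hx'y' : G.Adj x' y')
    (hxw : G.Adj x w) (hwP1 : G.Adj w (P 1)) (hwne : w ≠ P 1)
    (hP0 : P 0 = x) (hPk : P k = x')
    (hadjP : ∀ i, i < k → G.Adj (P i) (P (i+1)))
    (hnonadjP : ∀ i j, i + 2 ≤ j → j ≤ k → ¬ G.Adj (P i) (P j))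
    (hshort : ∀ i, 3 ≤ i → i ≤ k → ¬ G.Adj w (P i))
    (hwx' : ¬ G.Adj w x')
    (hwy' : ¬ G.Adj w y')
    (hPy' : ∀ i, i < k → ¬ G.Adj (P i) y') :
    G.Adj w (P 2) := by
  by_contra hw2
  rcases eq_or_lt_of_le hk with hk3 | hk4
  · -- k = 3 : Z3 on x, w, P1, P2, x', y'
    have hP3 : P 3 = x' := hk3 ▸ hPk
    refine Z3_false hZ3 (a0 := x) (a1 := w) (a2 := P 1) (a3 := P 2) (a4 := x') (a5 := y')
      hxw (hP0 ▸ hadjP 0 (by omega)) hwP1 (hadjP 1 (by omega)) (hP3 ▸ hadjP 2 (by omega))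
      hx'y' ?_ ?_ ?_ hw2 hwx' hwy' ?_ ?_ ?_
    · exact hP0 ▸ hnonadjP 0 2 (by omega) (by omega)
    · exact hP0 ▸ hP3 ▸ hnonadjP 0 3 (by omega) (by omega)
    · exact hP0 ▸ hPy' 0 (by omega)
    · exact hP3 ▸ hnonadjP 1 3 (by omega) (by omega)
    · exact hPy' 1 (by omega)
    · exact hPy' 2 (by omega)
  · -- k ≥ 4 : Z3 on x, w, P1, P2, P3, P4
    refine Z3_false hZ3 (a0 := x) (a1 := w) (a2 := P 1) (a3 := P 2) (a4 := P 3) (a5 := P 4)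
      hxw (hP0 ▸ hadjP 0 (by omega)) hwP1 (hadjP 1 (by omega)) (hadjP 2 (by omega))
      (hadjP 3 (by omega)) ?_ ?_ ?_ hw2 ?_ ?_ ?_ ?_ ?_
    · exact hP0 ▸ hnonadjP 0 2 (by omega) (by omega)
    · exact hP0 ▸ hnonadjP 0 3 (by omega) (by omega)
    · exact hP0 ▸ hnonadjP 0 4 (by omega) (by omega)
    · exact hshort 3 (by omega) (by omega)
    · exact hshort 4 (by omega) (by omega)
    · exact hnonadjP 1 3 (by omega) (by omega)
    · exact hnonadjP 1 4 (by omega) (by omega)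
    · exact hnonadjP 2 4 (by omega) (by omega)

end Part3

theorem common_neighbor_in_block_Z3 {V : Type} [Fintype V] (G : SimpleGraph V)
    (hconn : G.Connected) (hclaw : IndFree G claw) (hZ3 : IndFree G Zgraph3)
    (B : Set V) (hB : IsBlock G B) (h2c : TwoConnectedOn G B)
    (x x' : V) (hx : x ∈ B) (hx' : x' ∈ B)
    (hcond : ∃ y v : V, y ≠ v ∧ y ∉ B ∧ v ∉ B ∧ G.Adj x y ∧ (G.Adj x v ∨ G.Adj y v))
    (hcond' : ∃ y v : V, y ≠ v ∧ y ∉ B ∧ v ∉ B ∧ G.Adj x' y ∧ (G.Adj x' v ∨ G.Adj y v)) :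
    (G.neighborSet x ∩ G.neighborSet x' ∩ B).Nonempty := by
  classical
  obtain ⟨y, v, hyB, hvB, hyv, hxy, hyvadj⟩ := pendant hclaw hB h2c hx hcond
  obtain ⟨y', v', hy'B, hv'B, hy'v', hx'y', hy'v'adj⟩ := pendant hclaw hB h2c hx' hcond'
  by_cases hxx : x = x'
  · subst hxx
    obtain ⟨w1, -, hw1B, -, -, hxw1, -⟩ := two_nbrs h2c hx
    exact ⟨w1, ⟨⟨hxw1, hxw1⟩, hw1B⟩⟩
  by_cases hadjxx : G.Adj x x'
  · obtain ⟨w1, w2, hw1B, hw2B, hww, hxw1, hxw2⟩ := two_nbrs h2c hx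
    obtain ⟨w, hwB, hxw, hwx'⟩ : ∃ w, w ∈ B ∧ G.Adj x w ∧ w ≠ x' := by
      by_cases h : w1 = x'
      · exact ⟨w2, hw2B, hxw2, fun hh => hww (h.trans hh.symm)⟩
      · exact ⟨w1, hw1B, hxw1, h⟩
    have hclq : G.Adj w x' := clique_nbrs hclaw hB hx hyB hxy hwB hx' hxw hadjxx hwx'
    exact ⟨w, ⟨⟨hxw, hclq.symm⟩, hwB⟩⟩
  by_contra hcom
  have hcommon : ∀ z, z ∈ B → G.Adj x z → G.Adj x' z → False := fun z hz h1 h2 =>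
    hcom ⟨z, ⟨⟨h1, h2⟩, hz⟩⟩
  have hHconn : (G.induce B).Connected := hB.2.1
  set vx : ↥B := ⟨x, hx⟩ with hvx
  set vx' : ↥B := ⟨x', hx'⟩ with hvx'
  set k := (G.induce B).dist vx vx' with hkdef
  obtain ⟨p, hp⟩ := hHconn.exists_walk_length_eq_dist vx vx'
  set P : ℕ → V := fun i => ((p.getVert i : ↥B) : V) with hPdef
  have hPmem : ∀ i, P i ∈ B := fun i => (p.getVert i).2
  have hP0 : P 0 = x := by simp [hPdef, hvx]
  have hgVk : p.getVert k = vx' := by rw [hkdef, ← hp]; exact p.getVert_length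
  have hPk : P k = x' := congrArg Subtype.val hgVk
  have hadjH : ∀ i, i < k → (G.induce B).Adj (p.getVert i) (p.getVert (i + 1)) :=
    fun i hi => p.adj_getVert_succ (by omega)
  have hadjP : ∀ i, i < k → G.Adj (P i) (P (i + 1)) := fun i hi => myInduceAdj.mp (hadjH i hi)
  have hd1 : ∀ (a b : ↥B), (G.induce B).Adj a b → (G.induce B).dist a b ≤ 1 := fun a b h => by
    simpa using SimpleGraph.dist_le (SimpleGraph.Walk.cons h SimpleGraph.Walk.nil)
  have hdL : ∀ i, (G.induce B).dist vx (p.getVert i) ≤ i := dist_getVert_left hHconn p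
  have hdR : ∀ i, (G.induce B).dist (p.getVert i) vx' ≤ k - i := by
    intro i; have h := dist_getVert_right p i; rwa [hp] at h
  have hdLe : ∀ i, i ≤ k → (G.induce B).dist vx (p.getVert i) = i := by
    intro i hi
    have h1 := hdL i
    have h2 := hdR i
    have h3 : k ≤ (G.induce B).dist vx (p.getVert i) + (G.induce B).dist (p.getVert i) vx' :=
      hHconn.dist_triangle
    omega
  have hdRe : ∀ i, i ≤ k → (G.induce B).dist (p.getVert i) vx' = k - i := by
    intro i hi
    have h1 := hdL i
    have h2 := hdR i
    have h3 : k ≤ (G.induce B).dist vx (p.getVert i) + (G.induce B).dist (p.getVert i) vx' :=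
      hHconn.dist_triangle
    omega
  have hne : ∀ i j, i < j → j ≤ k → P i ≠ P j := by
    intro i j hij hj h
    have hsub : p.getVert i = p.getVert j := Subtype.ext h
    have h1 := hdLe i (by omega)
    have h2 := hdLe j hj
    rw [hsub] at h1
    omega
  have hnonadj : ∀ i j, i + 2 ≤ j → j ≤ k → ¬ G.Adj (P i) (P j) := by
    intro i j hij hj hadj
    have hH : (G.induce B).Adj (p.getVert i) (p.getVert j) := myInduceAdj.mpr hadj
    have h1 := hd1 _ _ hH
    have h2 := hdLe i (by omega)
    have h3 := hdRe j hj
    have h4 : k ≤ (G.induce B).dist vx (p.getVert i) +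
        ((G.induce B).dist (p.getVert i) (p.getVert j) +
          (G.induce B).dist (p.getVert j) vx') :=
      le_trans hHconn.dist_triangle (by
        exact Nat.add_le_add_left hHconn.dist_triangle _)
    omega
  have hk0 : k ≠ 0 := by
    intro h
    have h2 : vx = vx' := hHconn.dist_eq_zero_iff.mp h
    exact hxx (congrArg Subtype.val h2)
  have hk1 : k ≠ 1 := fun h =>
    hadjxx (myInduceAdj.mp (SimpleGraph.dist_eq_one_iff_adj.mp h))
  have hk2 : k ≠ 2 := by
    intro h
    apply hcommon (P 1) (hPmem 1) (hP0 ▸ hadjP 0 (by omega))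
    have h2 : P 2 = x' := by rw [← hPk, h]
    exact (h2 ▸ hadjP 1 (by omega)).symm
  have hk3 : 3 ≤ k := by omega
  -- shortcut lemmas
  have hshortX : ∀ w, w ∈ B → G.Adj x w → ∀ i, 3 ≤ i → i ≤ k → ¬ G.Adj w (P i) := by
    intro w hwB hxw i h3 hik hadj
    have d1 : (G.induce B).dist vx ⟨w, hwB⟩ ≤ 1 := hd1 _ _ (myInduceAdj.mpr hxw)
    have d2 : (G.induce B).dist ⟨w, hwB⟩ (p.getVert i) ≤ 1 := hd1 _ _ (myInduceAdj.mpr hadj)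
    have d3 := hdRe i hik
    have d4 : k ≤ (G.induce B).dist vx ⟨w, hwB⟩ +
        ((G.induce B).dist ⟨w, hwB⟩ (p.getVert i) + (G.induce B).dist (p.getVert i) vx') :=
      le_trans hHconn.dist_triangle (by exact Nat.add_le_add_left hHconn.dist_triangle _)
    omega
  have hshortX' : ∀ w, w ∈ B → G.Adj x' w → ∀ i, 3 ≤ i → i ≤ k → ¬ G.Adj w (P (k - i)) := by
    intro w hwB hx'w i h3 hik hadj
    have d1 : (G.induce B).dist (p.getVert (k - i)) ⟨w, hwB⟩ ≤ 1 :=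
      hd1 _ _ (myInduceAdj.mpr hadj.symm)
    have d2 : (G.induce B).dist ⟨w, hwB⟩ vx' ≤ 1 := hd1 _ _ (myInduceAdj.mpr hx'w.symm)
    have d3 := hdLe (k - i) (by omega)
    have d4 : k ≤ (G.induce B).dist vx (p.getVert (k - i)) +
        ((G.induce B).dist (p.getVert (k - i)) ⟨w, hwB⟩ + (G.induce B).dist ⟨w, hwB⟩ vx') :=
      le_trans hHconn.dist_triangle (by exact Nat.add_le_add_left hHconn.dist_triangle _)
    omega
  -- pendant vertices are not adjacent to interior path vertices
  have hyP : ∀ i, 1 ≤ i → i ≤ k → ¬ G.Adj y (P i) := by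
    intro i h1 hik hadj
    exact hne 0 i h1 hik (by
      rw [hP0]
      exact (unique_B_nbr hB hyB (hPmem i) hx hadj hxy.symm).symm)
  have hy'P : ∀ i, i < k → ¬ G.Adj y' (P i) := by
    intro i hik hadj
    exact hne i k hik le_rfl (by
      rw [hPk]
      exact unique_B_nbr hB hy'B (hPmem i) hx' hadj hx'y'.symm)
  -- triangle case at x
  by_cases hxv : G.Adj x v
  · have hvP : ∀ i, 1 ≤ i → i ≤ k → ¬ G.Adj v (P i) := by
      intro i h1 hik hadj
      exact hne 0 i h1 hik (by
        rw [hP0]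
        exact (unique_B_nbr hB hvB (hPmem i) hx hadj hxv.symm).symm)
    exact Z3_false hZ3 (a0 := y) (a1 := v) (a2 := x) (a3 := P 1) (a4 := P 2) (a5 := P 3)
      hyvadj hxy.symm hxv.symm (hP0 ▸ hadjP 0 (by omega)) (hadjP 1 (by omega))
      (hadjP 2 (by omega))
      (hyP 1 (by omega) (by omega)) (hyP 2 (by omega) (by omega)) (hyP 3 (by omega) (by omega))
      (hvP 1 (by omega) (by omega)) (hvP 2 (by omega) (by omega)) (hvP 3 (by omega) (by omega))
      (hP0 ▸ hnonadj 0 2 (by omega) (by omega)) (hP0 ▸ hnonadj 0 3 (by omega) (by omega))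
      (hnonadj 1 3 (by omega) (by omega))
  -- triangle case at x'
  by_cases hx'v' : G.Adj x' v'
  · have hv'P : ∀ i, i < k → ¬ G.Adj v' (P i) := by
      intro i hik hadj
      exact hne i k hik le_rfl (by
        rw [hPk]
        exact unique_B_nbr hB hv'B (hPmem i) hx' hadj hx'v'.symm)
    have e23 : G.Adj x' (P (k - 1)) := by
      have h := hadjP (k - 1) (by omega)
      rw [show k - 1 + 1 = k by omega, hPk] at h
      exact h.symm
    have e34 : G.Adj (P (k - 1)) (P (k - 2)) := by
      have h := hadjP (k - 2) (by omega)
      rw [show k - 2 + 1 = k - 1 by omega] at h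
      exact h.symm
    have e45 : G.Adj (P (k - 2)) (P (k - 3)) := by
      have h := hadjP (k - 3) (by omega)
      rw [show k - 3 + 1 = k - 2 by omega] at h
      exact h.symm
    refine Z3_false hZ3 (a0 := y') (a1 := v') (a2 := x') (a3 := P (k - 1)) (a4 := P (k - 2))
      (a5 := P (k - 3)) hy'v'adj hx'y'.symm hx'v'.symm e23 e34 e45
      (hy'P (k - 1) (by omega)) (hy'P (k - 2) (by omega)) (hy'P (k - 3) (by omega))
      (hv'P (k - 1) (by omega)) (hv'P (k - 2) (by omega)) (hv'P (k - 3) (by omega))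
      ?_ ?_ ?_
    · exact fun h => hnonadj (k - 2) k (by omega) le_rfl (by rw [hPk]; exact h.symm)
    · exact fun h => hnonadj (k - 3) k (by omega) le_rfl (by rw [hPk]; exact h.symm)
    · exact fun h => hnonadj (k - 3) (k - 1) (by omega) (by omega) h.symm
  -- both path cases
  obtain ⟨w1, w2, hw1B, hw2B, hww, hxw1, hxw2⟩ := two_nbrs h2c hx
  obtain ⟨w, hwB, hxw, hwP1ne⟩ : ∃ w, w ∈ B ∧ G.Adj x w ∧ w ≠ P 1 := by
    by_cases h : w1 = P 1
    · exact ⟨w2, hw2B, hxw2, fun hh => hww (h.trans hh.symm)⟩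
    · exact ⟨w1, hw1B, hxw1, h⟩
  have hxP1 : G.Adj x (P 1) := hP0 ▸ hadjP 0 (by omega)
  have hwP1 : G.Adj w (P 1) :=
    clique_nbrs hclaw hB hx hyB hxy hwB (hPmem 1) hxw hxP1 hwP1ne
  have hwx'adj : ¬ G.Adj w x' := fun h => hcommon w hwB hxw h.symm
  have hwnex' : w ≠ x' := fun h => hadjxx (h ▸ hxw)
  have hwy' : ¬ G.Adj w y' := fun h =>
    hwnex' (unique_B_nbr hB hy'B hwB hx' h.symm hx'y'.symm)
  obtain ⟨w1', w2', hw1'B, hw2'B, hww', hx'w1', hx'w2'⟩ := two_nbrs h2c hx'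
  obtain ⟨w', hw'B, hx'w', hw'ne⟩ : ∃ w', w' ∈ B ∧ G.Adj x' w' ∧ w' ≠ P (k - 1) := by
    by_cases h : w1' = P (k - 1)
    · exact ⟨w2', hw2'B, hx'w2', fun hh => hww' (h.trans hh.symm)⟩
    · exact ⟨w1', hw1'B, hx'w1', h⟩
  have hx'Pk1 : G.Adj x' (P (k - 1)) := by
    have h := hadjP (k - 1) (by omega)
    rw [show k - 1 + 1 = k by omega, hPk] at h
    exact h.symm
  have hw'Pk1 : G.Adj w' (P (k - 1)) :=
    clique_nbrs hclaw hB hx' hy'B hx'y' hw'B (hPmem (k - 1)) hx'w' hx'Pk1 hw'ne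
  have hw'x : ¬ G.Adj w' x := fun h => hcommon w' hw'B h.symm hx'w'
  have hw'nex : w' ≠ x := fun h => hadjxx (h ▸ hx'w').symm
  have hw'y : ¬ G.Adj w' y := fun h =>
    hw'nex (unique_B_nbr hB hyB hw'B hx h.symm hxy.symm)
  have hPy' : ∀ i, i < k → ¬ G.Adj (P i) y' := fun i hik h => hy'P i hik h.symm
  have hFx : G.Adj w (P 2) := by
    refine step2 (B := B) hZ3 hk3 hyB hy'B hxy hx'y' hxw hwP1 hwP1ne hP0 hPk hadjP hnonadj
      (fun i h3 hik => hshortX w hwB hxw i h3 hik) hwx'adj hwy' hPy'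
  have hFx' : G.Adj w' (P (k - 2)) := by
    have hQadj : ∀ i, i < k → G.Adj (P (k - i)) (P (k - (i + 1))) := by
      intro i hik
      have h := hadjP (k - (i + 1)) (by omega)
      rw [show k - (i + 1) + 1 = k - i by omega] at h
      exact h.symm
    have h := step2 (B := B) hZ3 (x := x') (x' := x) (y := y') (y' := y) (w := w')
      (P := fun i => P (k - i)) (k := k) hk3 hy'B hyB hx'y' hxy hx'w'
      (by simpa using hw'Pk1) (by simpa using hw'ne)
      (by simpa using hPk) (by simpa using hP0)
      hQadj
      (fun i j hij hj h => hnonadj (k - j) (k - i) (by omega) (by omega) h.symm)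
      (fun i h3 hik => hshortX' w' hw'B hx'w' i h3 hik)
      hw'x hw'y
      (fun i hik h => hyP (k - i) (by omega) (by omega) h.symm)
    simpa using h
  -- if k ≥ 4 we directly get a Z3
  rcases eq_or_lt_of_le hk3 with hk3e | hk4
  · -- k = 3 endgame
    have hP3 : P 3 = x' := by rw [← hPk, ← hk3e]
    have hk1e : k - 1 = 2 := by omega
    have hk2e : k - 2 = 1 := by omega
    have hFx'1 : G.Adj w' (P 1) := hk2e ▸ hFx'
    have hw'neP1 : w' ≠ P 1 := by
      intro h
      exact hnonadj 1 3 (by omega) (by omega) (by rw [hP3]; exact (h ▸ hx'w').symm)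
    have hP2x' : G.Adj (P 2) x' := hP3 ▸ hadjP 2 (by omega)
    have hw'P2 : G.Adj w' (P 2) := by
      have := hw'Pk1
      rwa [hk1e] at this
    have hxnw' : ¬ G.Adj x w' := fun h => hcommon w' hw'B h hx'w'
    have hxnew' : x ≠ w' := fun h => hadjxx (h ▸ hx'w').symm
    have hwneP2 : w ≠ P 2 := fun h => hnonadj 0 2 (by omega) (by omega) (hP0 ▸ (h ▸ hxw))
    have hvP1 : ¬ G.Adj v (P 1) := by
      intro hvp1
      exact claw_false hclaw (c := P 1) (l1 := x) (l2 := w') (l3 := v)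
        hxP1.symm hFx'1.symm hvp1.symm
        hxnw' hxv (fun h => hw'neP1 (unique_B_nbr hB hvB hw'B (hPmem 1) h.symm hvp1))
        hxnew' (fun h => hvB (h ▸ hx)) (fun h => hvB (h ▸ hw'B))
    have hvP2 : ¬ G.Adj v (P 2) := by
      intro hvp2
      refine claw_false hclaw (c := P 2) (l1 := x') (l2 := w) (l3 := v)
        hP2x' hFx.symm hvp2.symm
        (fun h => hcommon w hwB hxw h) ?_ ?_ ?_ ?_ ?_
      · intro h
        exact hne 2 3 (by omega) (by omega) (by
          rw [hP3]
          exact unique_B_nbr hB hvB (hPmem 2) hx' hvp2 h.symm)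
      · intro h
        exact hwneP2 (unique_B_nbr hB hvB hwB (hPmem 2) h.symm hvp2)
      · intro h
        exact hadjxx (by rw [h]; exact hxw)
      · intro h
        exact hvB (h ▸ hx')
      · intro h
        exact hvB (h ▸ hwB)
    by_cases hvw' : G.Adj v w'
    · exact Z3_false hZ3 (a0 := P 2) (a1 := x') (a2 := w') (a3 := v) (a4 := y) (a5 := x)
        hP2x' hw'P2.symm hx'w' hvw'.symm hyvadj.symm hxy.symm
        (fun h => hvP2 h.symm)
        (fun h => hyP 2 (by omega) (by omega) h.symm)
        (fun h => hnonadj 0 2 (by omega) (by omega) (hP0 ▸ h.symm))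
        (fun h => hx'w'.ne (unique_B_nbr hB hvB hx' hw'B h.symm hvw'))
        (fun h => hxx (unique_B_nbr hB hyB hx' hx h.symm hxy.symm).symm)
        (fun h => hadjxx h.symm)
        hw'y
        (fun h => hxnw' h.symm)
        (fun h => hxv h.symm)
    · exact Z3_false hZ3 (a0 := w') (a1 := P 2) (a2 := P 1) (a3 := x) (a4 := y) (a5 := v)
        hw'P2 hFx'1 (hadjP 1 (by omega)).symm hxP1.symm hxy hyvadj
        (fun h => hxnw' h.symm)
        hw'y
        (fun h => hvw' h.symm)
        (fun h => hnonadj 0 2 (by omega) (by omega) (hP0 ▸ h.symm))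
        (fun h => hyP 2 (by omega) (by omega) h.symm)
        (fun h => hvP2 h.symm)
        (fun h => hyP 1 (by omega) (by omega) h.symm)
        (fun h => hvP1 h.symm)
        hxv
  · rcases eq_or_lt_of_le (show 4 ≤ k by omega) with hk4e | hk5
    · have hP4 : P 4 = x' := by rw [← hPk, ← hk4e]
      exact Z3_false hZ3 (a0 := w) (a1 := P 1) (a2 := P 2) (a3 := P 3) (a4 := x') (a5 := y')
        hwP1 hFx (hadjP 1 (by omega)) (hadjP 2 (by omega))
        (by rw [← hP4]; exact hadjP 3 (by omega)) hx'y'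
        (hshortX w hwB hxw 3 (by omega) (by omega))
        hwx'adj hwy'
        (hnonadj 1 3 (by omega) (by omega))
        (fun h => hnonadj 1 4 (by omega) (by omega) (by rw [hP4]; exact h))
        (hPy' 1 (by omega))
        (fun h => hnonadj 2 4 (by omega) (by omega) (by rw [hP4]; exact h))
        (hPy' 2 (by omega))
        (hPy' 3 (by omega))
    · exact Z3_false hZ3 (a0 := w) (a1 := P 1) (a2 := P 2) (a3 := P 3) (a4 := P 4) (a5 := P 5)
        hwP1 hFx (hadjP 1 (by omega)) (hadjP 2 (by omega)) (hadjP 3 (by omega))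
        (hadjP 4 (by omega))
        (hshortX w hwB hxw 3 (by omega) (by omega))
        (hshortX w hwB hxw 4 (by omega) (by omega))
        (hshortX w hwB hxw 5 (by omega) (by omega))
        (hnonadj 1 3 (by omega) (by omega)) (hnonadj 1 4 (by omega) (by omega))
        (hnonadj 1 5 (by omega) (by omega)) (hnonadj 2 4 (by omega) (by omega))
        (hnonadj 2 5 (by omega) (by omega)) (hnonadj 3 5 (by omega) (by omega))
end
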